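/- arXiv:2109.10982 — 6 statements merged into one kernel-verified Lean document; each statement's English description precedes it below -/
import Mathlib

section
/- For every D ∈ ℕ with D ≥ 1 and every θ > 0 there exists a constant c > 0 such that the following holds: for every connected finite simple graph G = (V,E) on n ≥ 2 vertices and every θ-embedding η : V → ℝ^D, one has stretch(η) · diam(G) ≥ c · n^{1/D}. -/
/-- The vertex boundary of `A`: vertices outside `A` adjacent to some vertex of `A`. -/
def vertexBoundary {V : Type*} (G : SimpleGraph V) (A : Set V) : Set V :=
  {v | v ∉ A ∧ ∃ u ∈ A, G.Adj u v}

/-- `G` is an `ε`-expander: `|∂A| ≥ ε·|A|` for all nonempty `A` with `|A| ≤ |V|/2`. -/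
def IsExpander {V : Type*} (G : SimpleGraph V) (ε : ℝ) : Prop :=
  ∀ A : Set V, A.Nonempty → 2 * A.ncard ≤ Nat.card V →
    ε * (A.ncard : ℝ) ≤ ((vertexBoundary G A).ncard : ℝ)

/-- `S` is a separator of `G`: `V = A ⊔ S ⊔ B` with no edge between `A` and `B`,
and `|A|, |B| ≤ 2|V|/3`. -/
def IsSeparator {V : Type*} (G : SimpleGraph V) (S : Set V) : Prop :=
  ∃ A B : Set V,
    Disjoint A S ∧ Disjoint B S ∧ Disjoint A B ∧
    A ∪ S ∪ B = Set.univ ∧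
    (∀ a ∈ A, ∀ b ∈ B, ¬ G.Adj a b) ∧
    3 * A.ncard ≤ 2 * Nat.card V ∧ 3 * B.ncard ≤ 2 * Nat.card V

/-- `η` is a `θ`-embedding: any two distinct vertices are mapped at distance `≥ θ`. -/
def IsThetaEmbedding {V : Type*} (θ : ℝ) {D : ℕ}
    (η : V → EuclideanSpace ℝ (Fin D)) : Prop :=
  ∀ u v : V, u ≠ v → θ ≤ ‖η u - η v‖

/-- The stretch of an embedding: the longest length of an edge. -/
noncomputable def stretch {V : Type*} (G : SimpleGraph V) {D : ℕ}
    (η : V → EuclideanSpace ℝ (Fin D)) : ℝ :=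
  sSup {x : ℝ | ∃ u v : V, G.Adj u v ∧ x = ‖η u - η v‖}

/-- The diameter of a graph: the largest graph distance between two vertices. -/
noncomputable def graphDiam {V : Type*} (G : SimpleGraph V) : ℕ :=
  sSup (Set.range fun p : V × V => G.dist p.1 p.2)

/-- `G` has maximum degree at most `δ`. -/
def maxDegLe {V : Type*} (G : SimpleGraph V) (δ : ℕ) : Prop :=
  ∀ v : V, (G.neighborSet v).ncard ≤ δ

/-- `G` is `t`-dense: some induced subgraph has no separator of size `< t`. -/
def IsDense {V : Type*} (G : SimpleGraph V) (t : ℕ) : Prop :=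
  ∃ U : Set V, ∀ S : Set U, IsSeparator (G.induce U) S → t ≤ S.ncard

/-- The set of edges of `G` whose length under the embedding `η` is at least `L`. -/
def longEdges {V : Type*} (G : SimpleGraph V) {D : ℕ}
    (η : V → EuclideanSpace ℝ (Fin D)) (L : ℝ) : Set (Sym2 V) :=
  {e | e ∈ G.edgeSet ∧ ∀ u v : V, e = s(u, v) → L ≤ ‖η u - η v‖}

open Metric MeasureTheory ENNReal

section Aux

variable {V : Type} [Fintype V] {D : ℕ} (G : SimpleGraph V)
  (η : V → EuclideanSpace ℝ (Fin D))

lemma stretch_bdd : BddAbove {x : ℝ | ∃ u v : V, G.Adj u v ∧ x = ‖η u - η v‖} := by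
  refine BddAbove.mono ?_ (Set.finite_range fun p : V × V => ‖η p.1 - η p.2‖).bddAbove
  rintro x ⟨u, v, _, rfl⟩; exact ⟨(u, v), rfl⟩

lemma edge_le_stretch {u v : V} (h : G.Adj u v) : ‖η u - η v‖ ≤ stretch G η :=
  le_csSup (stretch_bdd G η) ⟨u, v, h, rfl⟩

lemma norm_le_stretch_mul_length {u v : V} (p : G.Walk u v) :
    ‖η u - η v‖ ≤ stretch G η * p.length := by
  induction p with
  | nil => simp [stretch]
  | cons h q ih =>
    rename_i a b w
    calc ‖η a - η w‖ ≤ ‖η a - η b‖ + ‖η b - η w‖ := norm_sub_le_norm_sub_add_norm_sub _ _ _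
    _ ≤ stretch G η + stretch G η * q.length :=
        add_le_add (edge_le_stretch G η h) ih
    _ = stretch G η * (SimpleGraph.Walk.cons h q).length := by
        simp [SimpleGraph.Walk.length_cons]; ring

lemma dist_le_graphDiam (u v : V) : G.dist u v ≤ graphDiam G :=
  le_csSup (Set.finite_range _).bddAbove ⟨(u, v), rfl⟩

end Aux

/-- For every `D ≥ 1` and `θ > 0` there is `c > 0` such that for every
connected graph `G` on `n ≥ 2` vertices and every `θ`-embedding `η` into `ℝ^D`,
`stretch(η) · diam(G) ≥ c · n^{1/D}`. -/
theorem stmt_2 (D : ℕ) (hD : 1 ≤ D) (θ : ℝ) (hθ : 0 < θ) :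
    ∃ c : ℝ, 0 < c ∧
      ∀ (V : Type) [Fintype V] (G : SimpleGraph V),
        2 ≤ Nat.card V → G.Connected →
        ∀ η : V → EuclideanSpace ℝ (Fin D), IsThetaEmbedding θ η →
          c * (Nat.card V : ℝ) ^ (1 / (D : ℝ)) ≤ stretch G η * (graphDiam G : ℝ) := by
  refine ⟨θ / 4, by positivity, ?_⟩
  intro V _ G hn hconn η hη
  rw [Nat.card_eq_fintype_card] at hn ⊢
  haveI hnont : Nontrivial V := Fintype.one_lt_card_iff_nontrivial.mp hn
  haveI : Nonempty (Fin D) := ⟨⟨0, hD⟩⟩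
  obtain ⟨u0, v0, huv⟩ := exists_pair_ne V
  set s := stretch G η with hs
  set d := graphDiam G with hd
  have hθs : θ ≤ s := by
    obtain ⟨p⟩ := hconn u0 v0
    cases p with
    | nil => exact absurd rfl huv
    | cons h q => exact le_trans (hη _ _ h.ne) (edge_le_stretch G η h)
  have hs0 : 0 < s := lt_of_lt_of_le hθ hθs
  have hd1 : (1 : ℝ) ≤ (d : ℝ) := by
    have h0 : G.dist u0 v0 ≠ 0 := fun hz => by
      rcases SimpleGraph.dist_eq_zero_iff_eq_or_not_reachable.mp hz with h | h
      · exact huv h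
      · exact h (hconn u0 v0)
    have h1 : 1 ≤ G.dist u0 v0 := Nat.one_le_iff_ne_zero.2 h0
    exact_mod_cast h1.trans (dist_le_graphDiam G u0 v0)
  set R := s * (d : ℝ) with hR
  have hθR : θ ≤ R := by nlinarith
  have hR0 : 0 < R := lt_of_lt_of_le hθ hθR
  have hkey : ∀ u v : V, ‖η u - η v‖ ≤ R := by
    intro u v
    obtain ⟨p, hp⟩ := hconn.exists_walk_length_eq_dist u v
    calc ‖η u - η v‖ ≤ s * p.length := norm_le_stretch_mul_length G η p
    _ ≤ R := by
        have hld : (p.length : ℝ) ≤ (d : ℝ) := by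
          rw [hp]; exact_mod_cast dist_le_graphDiam G u v
        rw [hR]; nlinarith
  set r := θ / 2 with hr
  have hr0 : 0 < r := by positivity
  have hdisj : (↑(Finset.univ : Finset V) : Set V).PairwiseDisjoint
      (fun v => ball (η v) r) := by
    intro a _ b _ hab
    refine ball_disjoint_ball ?_
    rw [dist_eq_norm]
    calc r + r = θ := by rw [hr]; ring
    _ ≤ ‖η a - η b‖ := hη a b hab
  have hsub : (⋃ v ∈ (Finset.univ : Finset V), ball (η v) r) ⊆ ball (η u0) (R + r) := by
    intro x hx
    simp only [Set.mem_iUnion, mem_ball] at hx ⊢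
    obtain ⟨v, _, hv⟩ := hx
    calc dist x (η u0) ≤ dist x (η v) + dist (η v) (η u0) := dist_triangle _ _ _
    _ < r + R := by
        have := hkey v u0
        rw [← dist_eq_norm] at this
        linarith
    _ = R + r := by ring
  have hmeas : (Fintype.card V : ℝ≥0∞) * volume (ball (0 : EuclideanSpace ℝ (Fin D)) r)
      ≤ volume (ball (0 : EuclideanSpace ℝ (Fin D)) (R + r)) := by
    calc (Fintype.card V : ℝ≥0∞) * volume (ball (0 : EuclideanSpace ℝ (Fin D)) r)
        = ∑ v : V, volume (ball (η v) r) := by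
          simp [Measure.addHaar_ball_center, Finset.sum_const, nsmul_eq_mul]
    _ = volume (⋃ v ∈ (Finset.univ : Finset V), ball (η v) r) :=
        (measure_biUnion_finset hdisj fun _ _ => measurableSet_ball).symm
    _ ≤ volume (ball (η u0) (R + r)) := measure_mono hsub
    _ = volume (ball (0 : EuclideanSpace ℝ (Fin D)) (R + r)) :=
        Measure.addHaar_ball_center _ _ _
  rw [Measure.addHaar_ball _ _ hr0.le, Measure.addHaar_ball _ _ (by positivity : (0:ℝ) ≤ R + r),
    finrank_euclideanSpace_fin, ← mul_assoc] at hmeas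
  have hc0 : volume (ball (0 : EuclideanSpace ℝ (Fin D)) 1) ≠ 0 :=
    (measure_ball_pos volume _ one_pos).ne'
  have hc1 : volume (ball (0 : EuclideanSpace ℝ (Fin D)) 1) ≠ ⊤ := measure_ball_lt_top.ne
  rw [ENNReal.mul_le_mul_iff_left hc0 hc1] at hmeas
  have hreal : (Fintype.card V : ℝ) * r ^ D ≤ (R + r) ^ D := by
    rw [← ENNReal.ofReal_natCast, ← ENNReal.ofReal_mul (by positivity)] at hmeas
    exact (ENNReal.ofReal_le_ofReal_iff (by positivity)).mp hmeas
  have hRr : R + r ≤ 2 * R := by rw [hr]; linarith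
  have h2 : (Fintype.card V : ℝ) * r ^ D ≤ (2 * R) ^ D :=
    hreal.trans (pow_le_pow_left₀ (by positivity) hRr D)
  have h3 : (Fintype.card V : ℝ) ≤ (2 * R / r) ^ D := by
    rw [div_pow, le_div_iff₀ (by positivity)]; exact h2
  have hDne : (D : ℝ) ≠ 0 := by positivity
  have h4 : (Fintype.card V : ℝ) ^ (1 / (D : ℝ)) ≤ 2 * R / r := by
    have h5 := Real.rpow_le_rpow (by positivity) h3 (by positivity : (0:ℝ) ≤ 1 / (D:ℝ))
    rwa [← Real.rpow_natCast (2 * R / r) D, ← Real.rpow_mul (by positivity),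
      mul_one_div, div_self hDne, Real.rpow_one] at h5
  calc θ / 4 * (Fintype.card V : ℝ) ^ (1 / (D : ℝ)) ≤ θ / 4 * (2 * R / r) := by
        have : (0:ℝ) ≤ θ / 4 := by positivity
        exact mul_le_mul_of_nonneg_left h4 this
  _ = R := by rw [hr]; field_simp; ring
end

section
/- Let ε ≥ 0 and let G = (V,E) be a finite simple graph on n vertices that is an ε-expander. Then every separator S of G satisfies |S| ≥ min(n/6, n·ε/6). -/
lemma aux_sep {V : Type*} [Fintype V] (G : SimpleGraph V) (ε : ℝ) (hε : 0 ≤ ε)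
    (hG : IsExpander G ε) (S C D : Set V)
    (hCS : Disjoint C S) (hSD : Disjoint S D) (hCD : Disjoint C D)
    (hUnion : C ∪ S ∪ D = Set.univ)
    (hNoEdge : ∀ a ∈ C, ∀ b ∈ D, ¬ G.Adj a b)
    (hD23 : 3 * D.ncard ≤ 2 * Nat.card V)
    (hC : 2 * C.ncard ≤ Nat.card V) :
    min ((Nat.card V : ℝ) / 6) ((Nat.card V : ℝ) * ε / 6) ≤ (S.ncard : ℝ) := by
  have hsum : C.ncard + S.ncard + D.ncard = Nat.card V := by
    have h1 : ((C ∪ S) ∪ D).ncard = (C ∪ S).ncard + D.ncard :=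
      Set.ncard_union_eq (Disjoint.union_left hCD hSD) (Set.toFinite _) (Set.toFinite _)
    have h2 : (C ∪ S).ncard = C.ncard + S.ncard :=
      Set.ncard_union_eq hCS (Set.toFinite _) (Set.toFinite _)
    rw [hUnion, Set.ncard_univ] at h1
    omega
  by_cases h6 : (Nat.card V : ℝ) ≤ 6 * S.ncard
  · refine le_trans (min_le_left _ _) (by linarith)
  · push_neg at h6
    have hsumR : (C.ncard : ℝ) + S.ncard + D.ncard = Nat.card V := by exact_mod_cast hsum
    have hD23R : 3 * (D.ncard : ℝ) ≤ 2 * Nat.card V := by exact_mod_cast hD23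
    have hSnn : (0 : ℝ) ≤ S.ncard := Nat.cast_nonneg _
    have hClb : (Nat.card V : ℝ) / 6 ≤ C.ncard := by linarith
    have hCne : C.Nonempty := by
      rw [Set.nonempty_iff_ne_empty]
      intro h
      rw [h, Set.ncard_empty] at hClb
      push_cast at hClb
      linarith
    have hexp := hG C hCne hC
    have hbd : vertexBoundary G C ⊆ S := by
      rintro v ⟨hvC, u, huC, hadj⟩
      have hv : v ∈ (C ∪ S) ∪ D := hUnion ▸ Set.mem_univ v
      rcases hv with (hv | hv) | hv
      · exact absurd hv hvC
      · exact hv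
      · exact absurd hadj (hNoEdge u huC v hv)
    have hle : ((vertexBoundary G C).ncard : ℝ) ≤ S.ncard := by
      exact_mod_cast Set.ncard_le_ncard hbd (Set.toFinite _)
    have hmul : ε * ((Nat.card V : ℝ) / 6) ≤ ε * C.ncard :=
      mul_le_mul_of_nonneg_left hClb hε
    refine le_trans (min_le_right _ _) (by linarith)

/-- If `G` on `n` vertices is an `ε`-expander, then every separator `S`
of `G` satisfies `|S| ≥ min(n/6, n·ε/6)`. -/
theorem stmt_4 {V : Type*} [Fintype V] (G : SimpleGraph V) (ε : ℝ) (hε : 0 ≤ ε)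
    (hG : IsExpander G ε) (S : Set V) (hS : IsSeparator G S) :
    min ((Nat.card V : ℝ) / 6) ((Nat.card V : ℝ) * ε / 6) ≤ (S.ncard : ℝ) := by
  obtain ⟨A, B, hAS, hBS, hAB, hUnion, hNoEdge, hA23, hB23⟩ := hS
  have hsum : A.ncard + S.ncard + B.ncard = Nat.card V := by
    have h1 : ((A ∪ S) ∪ B).ncard = (A ∪ S).ncard + B.ncard :=
      Set.ncard_union_eq (Disjoint.union_left hAB hBS.symm) (Set.toFinite _) (Set.toFinite _)
    have h2 : (A ∪ S).ncard = A.ncard + S.ncard :=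
      Set.ncard_union_eq hAS (Set.toFinite _) (Set.toFinite _)
    rw [hUnion, Set.ncard_univ] at h1
    omega
  by_cases hc : 2 * A.ncard ≤ Nat.card V
  · exact aux_sep G ε hε hG S A B hAS hBS.symm hAB hUnion hNoEdge hB23 hc
  · have hc' : 2 * B.ncard ≤ Nat.card V := by omega
    have hUnion' : B ∪ S ∪ A = Set.univ := by
      rw [← hUnion]; ext x; simp only [Set.mem_union]; tauto
    exact aux_sep G ε hε hG S B A hBS hAS.symm hAB.symm hUnion'
      (fun b hb a ha h => hNoEdge a ha b hb h.symm) hA23 hc'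
end

section
/- Let G = (V,E) be a finite simple graph on n vertices and let φ ∈ [0,1]. If every separator of G has size at least φ·n, then there exists a subset W ⊆ V with |W| ≥ n/2 such that the induced subgraph G[W] is a (2φ/3)-expander. -/

lemma vb_subset_compl' {V : Type*} (G : SimpleGraph V) (A : Set V) :
    vertexBoundary G A ⊆ Aᶜ := fun _ hv => hv.1

lemma sep_of {V : Type*} [Fintype V] (G : SimpleGraph V) (A : Set V)
    (hA3 : 3 * A.ncard ≤ 2 * Nat.card V) (hB3 : 3 * Aᶜ.ncard ≤ 2 * Nat.card V) :
    IsSeparator G (vertexBoundary G A) := by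
  refine ⟨A, Aᶜ \ vertexBoundary G A, ?_, ?_, ?_, ?_, ?_, hA3, ?_⟩
  · exact Set.disjoint_left.2 fun a ha hb => hb.1 ha
  · exact Set.disjoint_left.2 fun a ha => ha.2
  · exact Set.disjoint_left.2 fun a ha hb => hb.1 ha
  · apply Set.eq_univ_of_forall
    intro v
    by_cases hv : v ∈ A
    · exact Or.inl (Or.inl hv)
    · by_cases hv2 : v ∈ vertexBoundary G A
      · exact Or.inl (Or.inr hv2)
      · exact Or.inr ⟨hv, hv2⟩
  · intro a ha b hb hadj
    exact hb.2 ⟨hb.1, a, ha, hadj⟩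
  · calc 3 * (Aᶜ \ vertexBoundary G A).ncard ≤ 3 * Aᶜ.ncard := by
          have := Set.ncard_le_ncard (Set.diff_subset (s := Aᶜ) (t := vertexBoundary G A))
            (Set.toFinite _)
          omega
      _ ≤ 2 * Nat.card V := hB3

lemma bd_induce {V : Type*} (G : SimpleGraph V) (W : Set V) (A : Set ↥W) :
    Subtype.val '' (vertexBoundary (G.induce W) A) =
      vertexBoundary G (Subtype.val '' A) ∩ (W \ Subtype.val '' A) := by
  ext v
  simp only [vertexBoundary, Set.mem_image, Set.mem_setOf_eq, Set.mem_inter_iff,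
    Set.mem_diff, SimpleGraph.comap_adj, Function.Embedding.coe_subtype]
  constructor
  · rintro ⟨⟨x, hxW⟩, ⟨hnA, ⟨u, huA, hadj⟩⟩, rfl⟩
    refine ⟨⟨?_, ⟨u, ⟨u, huA, rfl⟩, hadj⟩⟩, hxW, ?_⟩ <;>
      · rintro ⟨y, hy, hyy⟩
        exact hnA (by rwa [Subtype.val_injective hyy] at hy)
  · rintro ⟨⟨hnA, ⟨u, ⟨y, hyA, rfl⟩, hadj⟩⟩, hvW, -⟩
    exact ⟨⟨v, hvW⟩, ⟨fun hc => hnA ⟨_, hc, rfl⟩, ⟨y, hyA, hadj⟩⟩, rfl⟩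

lemma key {V : Type*} [Fintype V] (G : SimpleGraph V) (φ : ℝ) (hφ0 : 0 < φ)
    (h : ∀ S : Set V, IsSeparator G S → φ * (Nat.card V : ℝ) ≤ (S.ncard : ℝ))
    (hn : 0 < Nat.card V) :
    ∀ k (W : Set V), W.ncard ≤ k → Nat.card V ≤ 2 * W.ncard →
      (Wᶜ = ∅ ∨ ((vertexBoundary G Wᶜ).ncard : ℝ) < (2 * φ / 3) * (Wᶜ.ncard : ℝ)) →
      ∃ W' : Set V, (Nat.card V : ℝ) / 2 ≤ (W'.ncard : ℝ) ∧
        IsExpander (G.induce W') (2 * φ / 3) := by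
  intro k
  induction k with
  | zero => intro W hWk hW2 _; omega
  | succ k IH =>
    intro W hWk hW2 hinv
    by_cases hE : IsExpander (G.induce W) (2 * φ / 3)
    · refine ⟨W, ?_, hE⟩
      have : (Nat.card V : ℝ) ≤ 2 * (W.ncard : ℝ) := by exact_mod_cast hW2
      linarith
    · rw [IsExpander] at hE; push_neg at hE
      obtain ⟨A, hAne, hAhalf, hAbd⟩ := hE
      set n := Nat.card V with hndef
      set ε := 2 * φ / 3 with hεdef
      set A' := Subtype.val '' A with hA'def
      have hA'W : A' ⊆ W := by rintro _ ⟨x, _, rfl⟩; exact x.2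
      have hA'card : A'.ncard = A.ncard := Set.ncard_image_of_injective _ Subtype.val_injective
      have hA'pos : 0 < A'.ncard := by
        rw [hA'card]
        exact (Set.ncard_pos (Set.toFinite A)).mpr hAne
      have hcardW : Nat.card ↥W = W.ncard := Nat.card_coe_set_eq W
      rw [hcardW] at hAhalf
      rw [← hA'card] at hAhalf
      -- boundary of A' within W
      set B := vertexBoundary G A' ∩ (W \ A') with hBdef
      have hBcard : (B.ncard : ℝ) = ((vertexBoundary (G.induce W) A).ncard : ℝ) := by
        rw [hBdef, hA'def, ← bd_induce, Set.ncard_image_of_injective _ Subtype.val_injective]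
      have hBlt : (B.ncard : ℝ) < ε * (A'.ncard : ℝ) := by
        rw [hBcard, hA'card]; exact hAbd
      set C := Wᶜ with hCdef
      set W2 := W \ A' with hW2def
      have hW2compl : W2ᶜ = C ∪ A' := by
        rw [hW2def, hCdef, Set.compl_eq_univ_diff]
        ext v
        simp only [Set.mem_diff, Set.mem_union, Set.mem_compl_iff, Set.mem_univ, true_and]
        tauto
      have hdisjCA : Disjoint C A' := Set.disjoint_left.2 fun a ha hb => ha (hA'W hb)
      have hCUcard : (C ∪ A').ncard = C.ncard + A'.ncard :=
        Set.ncard_union_eq hdisjCA (Set.toFinite _) (Set.toFinite _)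
      have hW2card : W2.ncard = W.ncard - A'.ncard := Set.ncard_diff hA'W (Set.toFinite _)
      have hA'leW : A'.ncard ≤ W.ncard := Set.ncard_le_ncard hA'W (Set.toFinite _)
      have hcompl : C.ncard + W.ncard = n := by
        rw [hCdef]
        rw [add_comm]
        exact Set.ncard_add_ncard_compl W
      -- the new boundary bound
      have hsub : vertexBoundary G (C ∪ A') ⊆ vertexBoundary G C ∪ B := by
        rintro v ⟨hvn, u, hu, hadj⟩
        rw [Set.mem_union] at hvn hu ⊢
        push_neg at hvn
        rcases hu with hu | hu
        · exact Or.inl ⟨hvn.1, u, hu, hadj⟩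
        · refine Or.inr ⟨⟨hvn.2, u, hu, hadj⟩, ?_, hvn.2⟩
          by_contra hvW
          exact hvn.1 hvW
      have hCbd : ((vertexBoundary G C).ncard : ℝ) ≤ ε * (C.ncard : ℝ) := by
        rcases hinv with hC0 | hlt
        · rw [hC0]
          simp [vertexBoundary]
        · exact le_of_lt hlt
      have hnewbd : ((vertexBoundary G (C ∪ A')).ncard : ℝ) < ε * ((C ∪ A').ncard : ℝ) := by
        have h1 : (vertexBoundary G (C ∪ A')).ncard ≤
            (vertexBoundary G C).ncard + B.ncard := by
          calc (vertexBoundary G (C ∪ A')).ncard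
              ≤ (vertexBoundary G C ∪ B).ncard := Set.ncard_le_ncard hsub (Set.toFinite _)
            _ ≤ _ := Set.ncard_union_le _ _
        have h1' : ((vertexBoundary G (C ∪ A')).ncard : ℝ) ≤
            ((vertexBoundary G C).ncard : ℝ) + (B.ncard : ℝ) := by exact_mod_cast h1
        have h2 : ((C ∪ A').ncard : ℝ) = (C.ncard : ℝ) + (A'.ncard : ℝ) := by
          exact_mod_cast hCUcard
        rw [h2, mul_add]
        linarith
      by_cases hsz : n ≤ 2 * W2.ncard
      · exact IH W2 (by omega) hsz (Or.inr (by rw [hW2compl] at *; exact hnewbd))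
      · exfalso
        push_neg at hsz
        by_cases hbig : 3 * (C ∪ A').ncard ≤ 2 * n
        · have hCUc : (C ∪ A')ᶜ = W2 := by rw [← hW2compl, compl_compl]
          have hsep := sep_of G (C ∪ A') (by rw [← hndef]; omega)
            (by rw [hCUc, ← hndef]; omega)
          have hc := h _ hsep
          have hbigR : 3 * (((C ∪ A').ncard : ℕ) : ℝ) ≤ 2 * (n : ℝ) := by exact_mod_cast hbig
          have hn' : (0 : ℝ) < (n : ℝ) := by exact_mod_cast hn
          nlinarith [hc, hnewbd, hbigR, mul_pos hφ0 hn']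
        · push_neg at hbig
          rw [hCUcard] at hbig
          -- nat facts
          have h3W : 3 * W.ncard < 2 * n := by omega
          have hC1 : 0 < C.ncard := by omega
          have hCne : C ≠ ∅ := by
            intro hc
            rw [hc] at hC1
            simp at hC1
          have hlt := hinv.resolve_left hCne
          have hsep := sep_of G C (by rw [← hndef]; omega) (by
            have hCc : Cᶜ = W := compl_compl W
            rw [hCc, ← hndef]; omega)
          have hc := h _ hsep
          have h2C : 2 * C.ncard ≤ n := by omega
          have h2C' : 2 * (C.ncard : ℝ) ≤ (n : ℝ) := by exact_mod_cast h2C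
          have hn' : (0 : ℝ) < (n : ℝ) := by exact_mod_cast hn
          nlinarith [hlt, hc, mul_le_mul_of_nonneg_left h2C' hφ0.le, mul_pos hφ0 hn']

/-- If every separator of `G` (on `n` vertices) has size at least `φ·n`,
then there is `W ⊆ V` with `|W| ≥ n/2` whose induced subgraph is a `(2φ/3)`-expander. -/
theorem stmt_5 {V : Type*} [Fintype V] (G : SimpleGraph V) (φ : ℝ)
    (hφ : φ ∈ Set.Icc (0 : ℝ) 1)
    (h : ∀ S : Set V, IsSeparator G S → φ * (Nat.card V : ℝ) ≤ (S.ncard : ℝ)) :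
    ∃ W : Set V, (Nat.card V : ℝ) / 2 ≤ (W.ncard : ℝ) ∧
      IsExpander (G.induce W) (2 * φ / 3) := by
  obtain ⟨hφ0, hφ1⟩ := hφ
  by_cases hn : Nat.card V = 0
  · refine ⟨Set.univ, ?_, ?_⟩
    · rw [Set.ncard_univ, hn]; norm_num
    · intro A hAne _
      exfalso
      have hE : IsEmpty V := by
        rw [Nat.card_eq_fintype_card] at hn
        exact Fintype.card_eq_zero_iff.mp hn
      obtain ⟨x, -⟩ := hAne
      exact hE.false x.1
  · rcases eq_or_lt_of_le hφ0 with hφz | hφpos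
    · refine ⟨Set.univ, ?_, ?_⟩
      · rw [Set.ncard_univ]
        have : (0:ℝ) ≤ (Nat.card V : ℝ) := by positivity
        linarith
      · intro A _ _
        rw [← hφz]
        norm_num
    · exact key G φ hφpos h (Nat.pos_of_ne_zero hn) (Set.univ : Set V).ncard Set.univ
        le_rfl (by rw [Set.ncard_univ]; omega)
        (Or.inl (by simp))
end

section
/- Let ε ∈ [0,1] and let G = (V,E) be a finite simple graph on n vertices that is an ε-expander. Then for any set of edges F ⊆ E with |F| ≤ n·ε/24, the graph G' = (V, E∖F) contains a subset W ⊆ V with |W| ≥ n/2 such that the subgraph of G' induced on W is an (ε/18)-expander. -/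
set_option maxHeartbeats 1000000

lemma sym2_endpoints_ncard_le {α : Type*} [Finite α] (F : Set (Sym2 α)) :
    {v : α | ∃ e ∈ F, v ∈ e}.ncard ≤ 2 * F.ncard := by
  refine Set.Finite.induction_on F (Set.toFinite F) (by simp) ?_
  rintro e s hes hs ih
  have h1 : {v : α | ∃ e' ∈ insert e s, v ∈ e'} ⊆
      {v : α | v ∈ e} ∪ {v : α | ∃ e' ∈ s, v ∈ e'} := by
    rintro v ⟨e', he', hv⟩
    rcases he' with rfl | he'
    · exact Or.inl hv
    · exact Or.inr ⟨e', he', hv⟩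
  have h2 : {v : α | v ∈ e}.ncard ≤ 2 := by
    induction e using Sym2.ind with
    | _ x y =>
      have hxy : {v : α | v ∈ s(x, y)} = {x, y} := by
        ext v; simp [Sym2.mem_iff]
      rw [hxy]
      exact (Set.ncard_insert_le _ _).trans (by simp)
  have h3 := Set.ncard_le_ncard h1 (Set.toFinite _)
  have h4 := Set.ncard_union_le {v : α | v ∈ e} {v : α | ∃ e' ∈ s, v ∈ e'}
  have h5 : (insert e s).ncard = s.ncard + 1 := Set.ncard_insert_of_notMem hes hs
  omega

theorem stmt7_main {V : Type*} [Fintype V] (G : SimpleGraph V) (ε : ℝ)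
    (hε0 : 0 < ε) (hε1 : ε ≤ 1) (hG : IsExpander G ε)
    (F : Set (Sym2 V))
    (hFcard : (F.ncard : ℝ) ≤ (Nat.card V : ℝ) * ε / 24) :
    ∀ k (B Z : Set V), Bᶜ.ncard ≤ k →
      2 * B.ncard ≤ Nat.card V →
      Z ⊆ Bᶜ → ((Z.ncard : ℝ)) ≤ ε / 18 * (B.ncard : ℝ) →
      (∀ u ∈ B, ∀ v, v ∉ B → G.Adj u v → s(u, v) ∉ F → v ∈ Z) →
      ∃ W : Set V, (Nat.card V : ℝ) / 2 ≤ (W.ncard : ℝ) ∧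
        IsExpander ((G.deleteEdges F).induce W) (ε / 18) := by
  intro k
  induction k with
  | zero =>
    intro B Z hk h2b hZsub hZcard hZprop
    -- Bᶜ is empty, so the whole graph has at most 0... in fact n = 0 is forced
    refine ⟨Bᶜ, ?_, ?_⟩
    · have hcompl : B.ncard + Bᶜ.ncard = Nat.card V := Set.ncard_add_ncard_compl B
      have : (Bᶜ.ncard : ℝ) = (Nat.card V : ℝ) - B.ncard := by
        rw [← hcompl]; push_cast; ring
      rw [this]
      have h2b' : 2 * (B.ncard : ℝ) ≤ (Nat.card V : ℝ) := by exact_mod_cast h2b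
      linarith
    · intro A hA hA2
      exfalso
      obtain ⟨⟨v, hv⟩, -⟩ := hA
      have : Bᶜ = ∅ := by
        rw [← Set.ncard_eq_zero (Set.toFinite _)] at *; omega
      rw [this] at hv; exact hv
  | succ k ih =>
    intro B Z hk h2b hZsub hZcard hZprop
    set G' := G.deleteEdges F with hG'
    set W := Bᶜ with hW
    by_cases hexp : IsExpander (G'.induce W) (ε / 18)
    · refine ⟨W, ?_, hexp⟩
      have hcompl : B.ncard + W.ncard = Nat.card V := Set.ncard_add_ncard_compl B
      have h2b' : 2 * (B.ncard : ℝ) ≤ (Nat.card V : ℝ) := by exact_mod_cast h2b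
      have : ((W.ncard : ℕ) : ℝ) = (Nat.card V : ℝ) - B.ncard := by
        rw [← hcompl]; push_cast; ring
      rw [this]; linarith
    · rw [IsExpander] at hexp
      push_neg at hexp
      obtain ⟨A, hAne, hA2, hAbd⟩ := hexp
      set A₀ := Subtype.val '' A with hA₀def
      set D₀ := Subtype.val '' (vertexBoundary (G'.induce W) A) with hD₀def
      have hA₀W : A₀ ⊆ W := by rintro _ ⟨u, hu, rfl⟩; exact u.2
      have hD₀W : D₀ ⊆ W := by rintro _ ⟨u, hu, rfl⟩; exact u.2
      have hancard : A₀.ncard = A.ncard :=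
        Set.ncard_image_of_injective _ Subtype.val_injective
      have hdncard : D₀.ncard = (vertexBoundary (G'.induce W) A).ncard :=
        Set.ncard_image_of_injective _ Subtype.val_injective
      have hA₀ne : A₀.Nonempty := by rw [hA₀def]; exact hAne.image _
      have hA2' : 2 * A₀.ncard ≤ W.ncard := by
        rw [hancard]
        rwa [Nat.card_coe_set_eq] at hA2
      have hAbd' : ((D₀.ncard : ℝ)) < ε / 18 * (A₀.ncard : ℝ) := by
        rw [hdncard, hancard]; exact hAbd
      -- membership characterization of D₀
      have hD₀mem : ∀ v ∈ W, v ∉ A₀ → ∀ u ∈ A₀, G'.Adj u v → v ∈ D₀ := by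
        rintro v hvW hvA u ⟨u', hu', rfl⟩ hadj
        refine ⟨⟨v, hvW⟩, ⟨?_, ⟨u', hu', hadj⟩⟩, rfl⟩
        intro hmem
        exact hvA ⟨⟨v, hvW⟩, hmem, rfl⟩
      have hD₀mem' : ∀ v ∈ D₀, v ∉ A₀ := by
        rintro _ ⟨v, hv, rfl⟩ ⟨u, hu, huv⟩
        exact hv.1 (by rwa [Subtype.val_injective huv] at hu)
      have hcompl : B.ncard + W.ncard = Nat.card V := Set.ncard_add_ncard_compl B
      by_cases hsz : 2 * (B.ncard + A₀.ncard) ≤ Nat.card V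
      · -- recurse with B ∪ A₀
        have hdisj : Disjoint B A₀ := by
          rw [Set.disjoint_left]; intro x hx hx'; exact (hA₀W hx') hx
        have hBA : (B ∪ A₀).ncard = B.ncard + A₀.ncard :=
          Set.ncard_union_eq hdisj (Set.toFinite _) (Set.toFinite _)
        refine ih (B ∪ A₀) ((Z ∪ D₀) \ (B ∪ A₀)) ?_ ?_ ?_ ?_ ?_
        · have hss : (B ∪ A₀)ᶜ ⊂ W := by
            rw [Set.ssubset_iff_of_subset (Set.compl_subset_compl.2 Set.subset_union_left)]
            obtain ⟨a, ha⟩ := hA₀ne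
            exact ⟨a, hA₀W ha, fun hc => hc (Or.inr ha)⟩
          have := Set.ncard_lt_ncard hss (Set.toFinite _)
          omega
        · rwa [hBA]
        · exact fun x hx => hx.2
        · have h1 : ((Z ∪ D₀) \ (B ∪ A₀)).ncard ≤ (Z ∪ D₀).ncard :=
            Set.ncard_le_ncard Set.diff_subset (Set.toFinite _)
          have h2 := Set.ncard_union_le Z D₀
          have hcast : (((Z ∪ D₀) \ (B ∪ A₀)).ncard : ℝ) ≤ (Z.ncard : ℝ) + D₀.ncard := by
            exact_mod_cast le_trans h1 h2
          rw [hBA]; push_cast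
          nlinarith [hAbd', hZcard]
        · intro u hu v hv hadj hF'
          have hvB : v ∉ B := fun h => hv (Or.inl h)
          have hvA : v ∉ A₀ := fun h => hv (Or.inr h)
          rcases hu with hu | hu
          · exact ⟨Or.inl (hZprop u hu v hvB hadj hF'), hv⟩
          · refine ⟨Or.inr ?_, hv⟩
            exact hD₀mem v hvB hvA u hu (by rw [hG', SimpleGraph.deleteEdges_adj]; exact ⟨hadj, hF'⟩)
      · -- the contradiction case
        exfalso
        have hnV : Nonempty V := ⟨hA₀ne.some⟩
        have hn1 : 1 ≤ Nat.card V := Nat.card_pos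
        set n := Nat.card V with hn
        set Y := {v : V | ∃ e ∈ F, v ∈ e} with hY
        have hYcard : (Y.ncard : ℝ) ≤ 2 * F.ncard := by
          exact_mod_cast sym2_endpoints_ncard_le F
        -- bound on B from expansion
        have hBbound : 17 * (ε * B.ncard) ≤ 36 * (F.ncard : ℝ) := by
          rcases B.eq_empty_or_nonempty with rfl | hBne
          · simp
          · have hexpB := hG B hBne h2b
            have hsub : vertexBoundary G B ⊆ Z ∪ Y := by
              rintro v ⟨hvB, u, hu, huv⟩
              by_cases hF' : s(u, v) ∈ F
              · exact Or.inr ⟨s(u, v), hF', Sym2.mem_mk_right u v⟩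
              · exact Or.inl (hZprop u hu v hvB huv hF')
            have h1 : ((vertexBoundary G B).ncard : ℝ) ≤ (Z.ncard : ℝ) + Y.ncard := by
              exact_mod_cast le_trans
                (Set.ncard_le_ncard hsub (Set.toFinite _))
                (Set.ncard_union_le Z Y)
            nlinarith
        -- define T
        set T := W \ (A₀ ∪ D₀ ∪ Z ∪ Y) with hT
        have hTW : T ⊆ W := Set.diff_subset
        -- lower bound on |T|
        have hTlow : (W.ncard : ℝ) ≤ (T.ncard : ℝ) + A₀.ncard + D₀.ncard + Z.ncard + Y.ncard := by
          have hWsub : W ⊆ T ∪ (A₀ ∪ D₀ ∪ Z ∪ Y) := fun x hx => by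
            by_cases h : x ∈ A₀ ∪ D₀ ∪ Z ∪ Y
            · exact Or.inr h
            · exact Or.inl ⟨hx, h⟩
          have h1 : W.ncard ≤ T.ncard + (A₀ ∪ D₀ ∪ Z ∪ Y).ncard :=
            le_trans (Set.ncard_le_ncard hWsub (Set.toFinite _)) (Set.ncard_union_le _ _)
          have h2 : (A₀ ∪ D₀ ∪ Z ∪ Y).ncard ≤ A₀.ncard + D₀.ncard + Z.ncard + Y.ncard := by
            calc (A₀ ∪ D₀ ∪ Z ∪ Y).ncard ≤ (A₀ ∪ D₀ ∪ Z).ncard + Y.ncard :=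
                  Set.ncard_union_le _ _
              _ ≤ (A₀ ∪ D₀).ncard + Z.ncard + Y.ncard := by
                  have := Set.ncard_union_le (A₀ ∪ D₀) Z; omega
              _ ≤ A₀.ncard + D₀.ncard + Z.ncard + Y.ncard := by
                  have := Set.ncard_union_le A₀ D₀; omega
          exact_mod_cast le_trans h1 (by omega)
        -- real versions of counts
        have hWn : (W.ncard : ℝ) = (n : ℝ) - B.ncard := by
          rw [← hcompl]; push_cast; ring
        have hA2'' : 2 * (A₀.ncard : ℝ) ≤ (W.ncard : ℝ) := by exact_mod_cast hA2'
        have hsz' : (n : ℝ) < 2 * ((B.ncard : ℝ) + A₀.ncard) := by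
          rw [not_le] at hsz; exact_mod_cast hsz
        have h2b'' : 2 * (B.ncard : ℝ) ≤ (n : ℝ) := by exact_mod_cast h2b
        have hn1' : (1 : ℝ) ≤ (n : ℝ) := by exact_mod_cast hn1
        -- b ≤ 3n/34
        have hb34 : (B.ncard : ℝ) ≤ 3 * (n : ℝ) / 34 := by
          nlinarith [hBbound, hFcard, hε0]
        -- auxiliary real bounds
        have h0n : (0 : ℝ) ≤ (n : ℝ) := by positivity
        have h0b : (0 : ℝ) ≤ (B.ncard : ℝ) := by positivity
        have hεn : ε * (n : ℝ) ≤ (n : ℝ) := mul_le_of_le_one_left h0n hε1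
        have ha2n : (A₀.ncard : ℝ) ≤ (n : ℝ) / 2 := by linarith
        have hd4 : (D₀.ncard : ℝ) ≤ ε * (n : ℝ) / 36 := by
          have h1 : ε / 18 * (A₀.ncard : ℝ) ≤ ε / 18 * ((n : ℝ) / 2) := by
            apply mul_le_mul_of_nonneg_left ha2n; positivity
          linarith [hAbd'.le]
        have hz4 : (Z.ncard : ℝ) ≤ ε * (n : ℝ) / 204 := by
          have h1 : ε / 18 * (B.ncard : ℝ) ≤ ε / 18 * (3 * (n : ℝ) / 34) := by
            apply mul_le_mul_of_nonneg_left hb34; positivity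
          linarith
        have hy4 : (Y.ncard : ℝ) ≤ ε * (n : ℝ) / 12 := by linarith
        have hwlow : 31 * (n : ℝ) / 34 ≤ (W.ncard : ℝ) := by linarith
        have htlow : 181 * (n : ℝ) / 612 ≤ (T.ncard : ℝ) := by linarith
        -- T is nonempty
        have hTpos : (0 : ℝ) < (T.ncard : ℝ) := by linarith
        have hTne : T.Nonempty := by
          apply Set.nonempty_of_ncard_ne_zero
          intro h; rw [h] at hTpos; simp at hTpos
        -- 2|T| ≤ n
        have h2T : 2 * T.ncard ≤ n := by
          have h1 : T ⊆ W \ A₀ := fun x hx => ⟨hx.1, fun h => hx.2 (Or.inl (Or.inl (Or.inl h)))⟩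
          have h2 : T.ncard ≤ (W \ A₀).ncard := Set.ncard_le_ncard h1 (Set.toFinite _)
          have h3 : (W \ A₀).ncard = W.ncard - A₀.ncard := Set.ncard_diff hA₀W (Set.toFinite _)
          have h4 : A₀.ncard ≤ W.ncard := Set.ncard_le_ncard hA₀W (Set.toFinite _)
          rw [not_le] at hsz
          omega
        -- expansion of T
        have hexpT := hG T hTne h2T
        have hTsub : vertexBoundary G T ⊆ D₀ ∪ Z ∪ Y := by
          rintro v ⟨hvT, u, hu, huv⟩
          by_cases hF' : s(u, v) ∈ F
          · exact Or.inr ⟨s(u, v), hF', Sym2.mem_mk_right u v⟩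
          have hG'uv : G'.Adj u v := by rw [hG', SimpleGraph.deleteEdges_adj]; exact ⟨huv, hF'⟩
          have huW : u ∈ W := hTW hu
          by_cases hvB : v ∈ B
          · exfalso
            have : u ∈ Z := hZprop v hvB u huW huv.symm (by rwa [Sym2.eq_swap])
            exact hu.2 (Or.inl (Or.inr this))
          have hvW : v ∈ W := hvB
          by_cases hvA : v ∈ A₀
          · exfalso
            have huA : u ∉ A₀ := fun h => hu.2 (Or.inl (Or.inl (Or.inl h)))
            have : u ∈ D₀ := hD₀mem u huW huA v hvA hG'uv.symm
            exact hu.2 (Or.inl (Or.inl (Or.inr this)))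
          · have : v ∈ A₀ ∪ D₀ ∪ Z ∪ Y := by
              by_contra h; exact hvT ⟨hvW, h⟩
            rcases this with ((h | h) | h) | h
            · exact absurd h hvA
            · exact Or.inl (Or.inl h)
            · exact Or.inl (Or.inr h)
            · exact Or.inr h
        have hbT : ((vertexBoundary G T).ncard : ℝ) ≤ (D₀.ncard : ℝ) + Z.ncard + Y.ncard := by
          have h1 : (vertexBoundary G T).ncard ≤ (D₀ ∪ Z ∪ Y).ncard :=
            Set.ncard_le_ncard hTsub (Set.toFinite _)
          have h2 := Set.ncard_union_le (D₀ ∪ Z) Y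
          have h3 := Set.ncard_union_le D₀ Z
          exact_mod_cast le_trans h1 (by omega)
        -- final contradiction
        have hεnpos : 0 < ε * (n : ℝ) := by positivity
        have h1 : ε * (181 * (n : ℝ) / 612) ≤ ε * (T.ncard : ℝ) :=
          mul_le_mul_of_nonneg_left htlow hε0.le
        linarith


/-- If `G` on `n` vertices is an `ε`-expander with `ε ∈ [0,1]`, then after
removing any `F ⊆ E` with `|F| ≤ n·ε/24`, the remaining graph contains `W` with
`|W| ≥ n/2` inducing an `(ε/18)`-expander. -/
theorem stmt_7 {V : Type*} [Fintype V] (G : SimpleGraph V) (ε : ℝ)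
    (hε : ε ∈ Set.Icc (0 : ℝ) 1) (hG : IsExpander G ε)
    (F : Set (Sym2 V)) (hF : F ⊆ G.edgeSet)
    (hFcard : (F.ncard : ℝ) ≤ (Nat.card V : ℝ) * ε / 24) :
    ∃ W : Set V, (Nat.card V : ℝ) / 2 ≤ (W.ncard : ℝ) ∧
      IsExpander ((G.deleteEdges F).induce W) (ε / 18) := by
  obtain ⟨hε0, hε1⟩ := hε
  rcases eq_or_lt_of_le hε0 with rfl | hεpos
  · refine ⟨Set.univ, ?_, ?_⟩
    · rw [Set.ncard_univ]
      have : (0 : ℝ) ≤ (Nat.card V : ℝ) := by positivity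
      linarith
    · intro A hA h2A
      norm_num
  · exact stmt7_main G ε hεpos hε1 hG F hFcard (Nat.card V) ∅ ∅
      (by simp [Set.ncard_univ]) (by simp) (by simp) (by simp) (by simp)
end

section
/- For every D ∈ ℕ with D ≥ 1, every θ > 0, and every δ ∈ ℕ, there exists a constant c > 0 such that the following holds: for every ε ∈ (0,1], every finite simple graph G = (V,E) on n ≥ 2 vertices with maximum degree at most δ that is an ε-expander, and every θ-embedding η : V → ℝ^D, there are at least n·ε/24 edges (u,v) ∈ E whose length under η satisfies ‖η(u) − η(v)‖ ≥ c · n^{1/D} · ε / log(n). -/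
/-! ### Auxiliary counting lemmas -/

section genericCounting
variable {V : Type} [Fintype V]

lemma aux_swap (X Y : Set V) (R : V → V → Prop) (hR : ∀ a b, R a b → R b a) :
    {p : V × V | p.1 ∈ X ∧ p.2 ∈ Y ∧ R p.1 p.2}.ncard
      = {p : V × V | p.1 ∈ Y ∧ p.2 ∈ X ∧ R p.1 p.2}.ncard := by
  apply le_antisymm <;>
  exact Set.ncard_le_ncard_of_injOn Prod.swap
      (fun p hp => ⟨hp.2.1, hp.1, hR _ _ hp.2.2⟩)
      (fun a _ b _ h => Prod.swap_injective h) (Set.toFinite _)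

lemma aux_splitY (X Y Y₁ Y₂ : Set V) (R : V → V → Prop) (hY : Y = Y₁ ∪ Y₂)
    (h : Disjoint Y₁ Y₂) :
    {p : V × V | p.1 ∈ X ∧ p.2 ∈ Y ∧ R p.1 p.2}.ncard
      = {p : V × V | p.1 ∈ X ∧ p.2 ∈ Y₁ ∧ R p.1 p.2}.ncard
        + {p : V × V | p.1 ∈ X ∧ p.2 ∈ Y₂ ∧ R p.1 p.2}.ncard := by
  subst hY
  rw [show {p : V × V | p.1 ∈ X ∧ p.2 ∈ Y₁ ∪ Y₂ ∧ R p.1 p.2}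
      = {p : V × V | p.1 ∈ X ∧ p.2 ∈ Y₁ ∧ R p.1 p.2}
        ∪ {p : V × V | p.1 ∈ X ∧ p.2 ∈ Y₂ ∧ R p.1 p.2} by
    ext p; simp only [Set.mem_setOf_eq, Set.mem_union]; tauto]
  apply Set.ncard_union_eq _ (Set.toFinite _) (Set.toFinite _)
  rw [Set.disjoint_left]
  rintro p ⟨_, h1, _⟩ ⟨_, h2, _⟩
  exact (h.le_bot ⟨h1, h2⟩).elim

lemma aux_splitX (X X₁ X₂ Y : Set V) (R : V → V → Prop) (hX : X = X₁ ∪ X₂)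
    (h : Disjoint X₁ X₂) :
    {p : V × V | p.1 ∈ X ∧ p.2 ∈ Y ∧ R p.1 p.2}.ncard
      = {p : V × V | p.1 ∈ X₁ ∧ p.2 ∈ Y ∧ R p.1 p.2}.ncard
        + {p : V × V | p.1 ∈ X₂ ∧ p.2 ∈ Y ∧ R p.1 p.2}.ncard := by
  subst hX
  rw [show {p : V × V | p.1 ∈ X₁ ∪ X₂ ∧ p.2 ∈ Y ∧ R p.1 p.2}
      = {p : V × V | p.1 ∈ X₁ ∧ p.2 ∈ Y ∧ R p.1 p.2}
        ∪ {p : V × V | p.1 ∈ X₂ ∧ p.2 ∈ Y ∧ R p.1 p.2} by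
    ext p; simp only [Set.mem_setOf_eq, Set.mem_union]; tauto]
  apply Set.ncard_union_eq _ (Set.toFinite _) (Set.toFinite _)
  rw [Set.disjoint_left]
  rintro p ⟨h1, _, _⟩ ⟨h2, _, _⟩
  exact (h.le_bot ⟨h1, h2⟩).elim

lemma aux_splitR (X Y : Set V) (R R₁ R₂ : V → V → Prop)
    (h : ∀ a b, R a b ↔ (R₁ a b ∨ R₂ a b)) (hd : ∀ a b, R₁ a b → R₂ a b → False) :
    {p : V × V | p.1 ∈ X ∧ p.2 ∈ Y ∧ R p.1 p.2}.ncard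
      = {p : V × V | p.1 ∈ X ∧ p.2 ∈ Y ∧ R₁ p.1 p.2}.ncard
        + {p : V × V | p.1 ∈ X ∧ p.2 ∈ Y ∧ R₂ p.1 p.2}.ncard := by
  rw [show {p : V × V | p.1 ∈ X ∧ p.2 ∈ Y ∧ R p.1 p.2}
      = {p : V × V | p.1 ∈ X ∧ p.2 ∈ Y ∧ R₁ p.1 p.2}
        ∪ {p : V × V | p.1 ∈ X ∧ p.2 ∈ Y ∧ R₂ p.1 p.2} by
    ext p; simp only [Set.mem_setOf_eq, Set.mem_union]
    constructor
    · rintro ⟨h1, h2, h3⟩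
      rcases (h _ _).1 h3 with h4 | h4
      exacts [Or.inl ⟨h1, h2, h4⟩, Or.inr ⟨h1, h2, h4⟩]
    · rintro (⟨h1, h2, h3⟩ | ⟨h1, h2, h3⟩) <;> exact ⟨h1, h2, (h _ _).2 (by tauto)⟩]
  apply Set.ncard_union_eq _ (Set.toFinite _) (Set.toFinite _)
  rw [Set.disjoint_left]
  rintro p ⟨_, _, h1⟩ ⟨_, _, h2⟩
  exact hd _ _ h1 h2

lemma aux_fiber {α β : Type*} [Fintype α] [Fintype β] {s : Set α} {t : Set β}
    (f : α → β) (k : ℕ)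
    (hmap : ∀ a ∈ s, f a ∈ t) (hfib : ∀ b, {a | a ∈ s ∧ f a = b}.ncard ≤ k) :
    s.ncard ≤ k * t.ncard := by
  classical
  rw [Set.ncard_eq_toFinset_card' s, Set.ncard_eq_toFinset_card' t]
  apply Finset.card_le_mul_card_image_of_maps_to (f := f)
  · intro a ha; simp only [Set.mem_toFinset] at *; exact hmap a ha
  · intro b _
    have := hfib b
    rw [show {a | a ∈ s ∧ f a = b} = ↑(s.toFinset.filter (fun x => f x = b)) by
      ext a; simp [Set.mem_toFinset]] at this
    rwa [Set.ncard_coe_finset] at this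
end genericCounting

/-! ### Packing lemma -/

open Set Metric MeasureTheory in
lemma aux_packing {D : ℕ} (hD : 1 ≤ D) {θ : ℝ} (hθ : 0 < θ)
    (P : Set (EuclideanSpace ℝ (Fin D))) (hP : P.Finite) (hne : P.Nonempty)
    (hsep : ∀ x ∈ P, ∀ y ∈ P, x ≠ y → θ ≤ ‖x - y‖) :
    ∃ x ∈ P, ∃ y ∈ P, (θ/2) * ((P.ncard : ℝ) ^ (1/(D:ℝ)) - 1) ≤ ‖x - y‖ := by
  classical
  have hfin : P.Finite := hP
  haveI : Nontrivial (EuclideanSpace ℝ (Fin D)) := by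
    apply Module.nontrivial_of_finrank_pos (R := ℝ)
    rw [finrank_euclideanSpace_fin]; omega
  obtain ⟨x₀, hx₀⟩ := hne
  set F := hfin.toFinset with hF
  have hFne : F.Nonempty := ⟨x₀, by simp [hF, hx₀]⟩
  obtain ⟨y₀, hy₀F, hy₀max⟩ := F.exists_max_image (fun y => ‖y - x₀‖) hFne
  have hy₀ : y₀ ∈ P := by simpa [hF] using hy₀F
  set R := ‖y₀ - x₀‖ with hR
  have hR0 : 0 ≤ R := norm_nonneg _
  refine ⟨y₀, hy₀, x₀, hx₀, ?_⟩
  have hdisj : (↑F : Set (EuclideanSpace ℝ (Fin D))).PairwiseDisjoint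
      (fun p => ball p (θ/2)) := by
    intro a ha b hb hab
    apply ball_disjoint_ball
    rw [dist_eq_norm]
    have := hsep a (by simpa [hF] using ha) b (by simpa [hF] using hb) hab
    linarith
  have hsub : ∀ p ∈ F, ball p (θ/2) ⊆ closedBall x₀ (R + θ/2) := by
    intro p hp z hz
    rw [mem_ball, dist_eq_norm] at hz
    rw [mem_closedBall, dist_eq_norm]
    have h1 : ‖p - x₀‖ ≤ R := hy₀max p hp
    calc ‖z - x₀‖ ≤ ‖z - p‖ + ‖p - x₀‖ := norm_sub_le_norm_sub_add_norm_sub _ _ _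
      _ ≤ R + θ/2 := by linarith
  have hvol : (F.card : ENNReal) * volume (ball (0 : EuclideanSpace ℝ (Fin D)) (θ/2))
      ≤ ENNReal.ofReal ((R + θ/2) ^ D) * volume (ball (0 : EuclideanSpace ℝ (Fin D)) 1) := by
    have h1 : volume (⋃ p ∈ F, ball p (θ/2)) = ∑ p ∈ F, volume (ball p (θ/2)) :=
      measure_biUnion_finset hdisj (fun p _ => measurableSet_ball)
    have h2 : (⋃ p ∈ F, ball p (θ/2)) ⊆ closedBall x₀ (R + θ/2) := by
      simp only [Set.iUnion_subset_iff]; exact hsub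
    have h3 : ∀ p ∈ F, volume (ball p (θ/2))
        = volume (ball (0 : EuclideanSpace ℝ (Fin D)) (θ/2)) := by
      intro p _
      simp [Measure.addHaar_ball_center]
    calc (F.card : ENNReal) * volume (ball (0 : EuclideanSpace ℝ (Fin D)) (θ/2))
        = ∑ p ∈ F, volume (ball p (θ/2)) := by
          rw [Finset.sum_congr rfl h3, Finset.sum_const, nsmul_eq_mul]
      _ = volume (⋃ p ∈ F, ball p (θ/2)) := h1.symm
      _ ≤ volume (closedBall x₀ (R + θ/2)) := measure_mono h2
      _ = ENNReal.ofReal ((R + θ/2) ^ Module.finrank ℝ (EuclideanSpace ℝ (Fin D)))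
            * volume (ball (0 : EuclideanSpace ℝ (Fin D)) 1) :=
          Measure.addHaar_closedBall _ _ (by linarith)
      _ = _ := by rw [finrank_euclideanSpace_fin]
  have hball : volume (ball (0 : EuclideanSpace ℝ (Fin D)) (θ/2))
      = ENNReal.ofReal ((θ/2) ^ D) * volume (ball (0 : EuclideanSpace ℝ (Fin D)) 1) := by
    rw [show volume (ball (0 : EuclideanSpace ℝ (Fin D)) (θ/2))
        = ENNReal.ofReal ((θ/2) ^ Module.finrank ℝ (EuclideanSpace ℝ (Fin D)))
            * volume (ball (0 : EuclideanSpace ℝ (Fin D)) 1) from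
      Measure.addHaar_ball _ _ (by linarith), finrank_euclideanSpace_fin]
  have hpos : (0 : ENNReal) < volume (ball (0 : EuclideanSpace ℝ (Fin D)) 1) :=
    measure_ball_pos _ _ one_pos
  have htop : volume (ball (0 : EuclideanSpace ℝ (Fin D)) 1) ≠ ⊤ :=
    measure_ball_lt_top.ne
  have hkey : (F.card : ℝ) * (θ/2)^D ≤ (R + θ/2)^D := by
    rw [hball, ← mul_assoc] at hvol
    have := ENNReal.mul_le_mul_iff_left hpos.ne' htop |>.1 hvol
    have h4 : ((F.card : ENNReal) * ENNReal.ofReal ((θ/2)^D)) =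
        ENNReal.ofReal ((F.card : ℝ) * (θ/2)^D) := by
      rw [ENNReal.ofReal_mul (by positivity), ENNReal.ofReal_natCast]
    rw [h4] at this
    exact ENNReal.ofReal_le_ofReal_iff (by positivity) |>.1 this
  have hcard : (P.ncard : ℝ) = F.card := by
    rw [hF]; exact_mod_cast congrArg Nat.cast (Set.ncard_eq_toFinset_card P hfin)
  have hroot : (P.ncard : ℝ) ^ (1/(D:ℝ)) * (θ/2) ≤ R + θ/2 := by
    have hD0 : (0:ℝ) < D := by exact_mod_cast hD
    have h6 : ((P.ncard : ℝ) * (θ/2)^D) ^ (1/(D:ℝ)) ≤ ((R + θ/2)^D) ^ (1/(D:ℝ)) := by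
      apply Real.rpow_le_rpow (by positivity) (by rw [hcard]; exact hkey) (by positivity)
    rw [Real.mul_rpow (by positivity) (by positivity)] at h6
    rw [← Real.rpow_natCast ((θ:ℝ)/2) D, ← Real.rpow_natCast (R + θ/2) D,
      ← Real.rpow_mul (by positivity), ← Real.rpow_mul (by positivity)] at h6
    rw [mul_one_div_cancel hD0.ne', Real.rpow_one, Real.rpow_one] at h6
    exact h6
  nlinarith [hroot]

/-! ### Cuts and pruning -/

section cuts
variable {V : Type} [Fintype V] {D : ℕ}
variable (G : SimpleGraph V) (η : V → EuclideanSpace ℝ (Fin D)) (L : ℝ)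

/-- ordered pairs of adjacent vertices from `X` to `Y` -/
def cutA (X Y : Set V) : Set (V × V) := {p | p.1 ∈ X ∧ p.2 ∈ Y ∧ G.Adj p.1 p.2}

/-- short adjacent pairs -/
def cutS (X Y : Set V) : Set (V × V) :=
  {p | p.1 ∈ X ∧ p.2 ∈ Y ∧ (G.Adj p.1 p.2 ∧ ‖η p.1 - η p.2‖ < L)}

/-- long adjacent pairs -/
def cutL (X Y : Set V) : Set (V × V) :=
  {p | p.1 ∈ X ∧ p.2 ∈ Y ∧ (G.Adj p.1 p.2 ∧ L ≤ ‖η p.1 - η p.2‖)}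

/-- the pruning potential -/
noncomputable def phi (ε : ℝ) (U : Set V) : ℝ :=
  ε/2 * ((Fintype.card V : ℝ) - U.ncard) + ((cutA G U Uᶜ).ncard : ℝ)
    + ((cutL G η L U U).ncard : ℝ)

lemma aux_expander_pairs {ε : ℝ} (hexp : IsExpander G ε) (A : Set V)
    (hne : A.Nonempty) (hhalf : 2 * A.ncard ≤ Fintype.card V) :
    ε * (A.ncard : ℝ) ≤ ((cutA G A Aᶜ).ncard : ℝ) := by
  classical
  have h1 := hexp A hne (by rwa [Nat.card_eq_fintype_card])
  refine le_trans h1 ?_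
  have : (vertexBoundary G A).ncard ≤ (cutA G A Aᶜ).ncard := by
    have hch : ∀ v : V, ∃ u, v ∈ vertexBoundary G A → (u ∈ A ∧ G.Adj u v) := by
      intro v
      by_cases h : v ∈ vertexBoundary G A
      · obtain ⟨u, hu, hadj⟩ := h.2; exact ⟨u, fun _ => ⟨hu, hadj⟩⟩
      · exact ⟨hne.choose, fun hc => absurd hc h⟩
    choose f hf using hch
    apply Set.ncard_le_ncard_of_injOn (fun v => (f v, v))
    · intro v hv
      obtain ⟨h1', h2'⟩ := hf v hv
      exact ⟨h1', hv.1, h2'⟩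
    · intro a _ b _ h
      exact congrArg Prod.snd h
  exact_mod_cast this

lemma aux_step {ε : ℝ} (hε : 0 < ε) (hexp : IsExpander G ε) (U A : Set V)
    (hAU : A ⊆ U) (hne : A.Nonempty) (hhalf : 2 * A.ncard ≤ U.ncard)
    (hbad : ((cutS G η L A (U \ A)).ncard : ℝ) < ε/4 * A.ncard) :
    phi G η L ε (U \ A) ≤ phi G η L ε U := by
  classical
  have hUcard : U.ncard ≤ Fintype.card V := by
    have := Set.ncard_le_ncard (Set.subset_univ U) (Set.toFinite _)
    rwa [Set.ncard_univ, Nat.card_eq_fintype_card] at this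
  have hAcard : A.ncard ≤ U.ncard := Set.ncard_le_ncard hAU (Set.toFinite _)
  have hdiffcard : ((U \ A).ncard : ℝ) = (U.ncard : ℝ) - A.ncard := by
    rw [Set.ncard_diff hAU]
    push_cast [Nat.cast_sub hAcard]
    ring
  have hAc : Aᶜ = (U \ A) ∪ Uᶜ := by
    ext v; by_cases hv : v ∈ U <;> simp [hv] <;> tauto
  have hUAc : (U \ A)ᶜ = Uᶜ ∪ A := by
    ext v
    simp only [Set.mem_compl_iff, Set.mem_diff, Set.mem_union, not_and, not_not]
    constructor
    · intro h; by_cases hv : v ∈ U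
      · exact Or.inr (h hv)
      · exact Or.inl hv
    · rintro (h | h) hv
      · exact absurd hv h
      · exact h
  have hUsplit : U = A ∪ (U \ A) := (Set.union_diff_cancel hAU).symm
  have hdisj1 : Disjoint (U \ A) Uᶜ := by
    rw [Set.disjoint_left]; exact fun v hv hc => hc hv.1
  have hdisj2 : Disjoint Uᶜ A := by
    rw [Set.disjoint_left]; exact fun v hv hc => hv (hAU hc)
  have hdisj3 : Disjoint A (U \ A) := Set.disjoint_sdiff_right.mono_left le_rfl
  have hRL : ∀ a b : V, (G.Adj a b ∧ L ≤ ‖η a - η b‖) → (G.Adj b a ∧ L ≤ ‖η b - η a‖) := by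
    intro a b h; exact ⟨h.1.symm, by rw [norm_sub_rev]; exact h.2⟩
  have h1 : ε * (A.ncard : ℝ) ≤ ((cutA G A Aᶜ).ncard : ℝ) :=
    aux_expander_pairs G hexp A hne (le_trans hhalf (by omega))
  have h2a : (cutA G A (U \ A)).ncard = (cutS G η L A (U \ A)).ncard
      + (cutL G η L A (U \ A)).ncard := by
    unfold cutA cutS cutL
    exact aux_splitR A (U \ A) (fun a b => G.Adj a b)
      (fun a b => G.Adj a b ∧ ‖η a - η b‖ < L)
      (fun a b => G.Adj a b ∧ L ≤ ‖η a - η b‖)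
      (fun a b => by
        constructor
        · intro h; by_cases hl : ‖η a - η b‖ < L
          exacts [Or.inl ⟨h, hl⟩, Or.inr ⟨h, not_lt.1 hl⟩]
        · rintro (⟨h, _⟩ | ⟨h, _⟩) <;> exact h)
      (fun a b h1' h2' => absurd h2'.2 (not_le.2 h1'.2))
  have h2 : (cutA G A Aᶜ).ncard = (cutA G A (U \ A)).ncard + (cutA G A Uᶜ).ncard := by
    unfold cutA
    exact aux_splitY A Aᶜ (U \ A) Uᶜ _ hAc hdisj1
  have h3 : (cutA G U Uᶜ).ncard = (cutA G A Uᶜ).ncard + (cutA G (U \ A) Uᶜ).ncard := by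
    unfold cutA
    exact aux_splitX U A (U \ A) Uᶜ _ hUsplit hdisj3
  have h4 : (cutA G (U \ A) (U \ A)ᶜ).ncard
      = (cutA G (U \ A) Uᶜ).ncard + (cutA G A (U \ A)).ncard := by
    unfold cutA
    rw [aux_splitY (U \ A) (U \ A)ᶜ Uᶜ A _ hUAc hdisj2,
      aux_swap (U \ A) A (fun a b => G.Adj a b) (fun a b h => h.symm)]
  have h5 : (cutL G η L U U).ncard = (cutL G η L A A).ncard
      + 2 * (cutL G η L A (U \ A)).ncard + (cutL G η L (U \ A) (U \ A)).ncard := by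
    unfold cutL
    rw [aux_splitX U A (U \ A) U (fun a b => G.Adj a b ∧ L ≤ ‖η a - η b‖) hUsplit hdisj3,
      aux_splitY A U A (U \ A) (fun a b => G.Adj a b ∧ L ≤ ‖η a - η b‖) hUsplit hdisj3,
      aux_splitY (U \ A) U A (U \ A) (fun a b => G.Adj a b ∧ L ≤ ‖η a - η b‖) hUsplit hdisj3,
      aux_swap (U \ A) A (fun a b => G.Adj a b ∧ L ≤ ‖η a - η b‖) hRL]
    ring
  rw [h2a] at h2
  rw [h2] at h1
  push_cast at h1
  have hc1 : (0:ℝ) ≤ ((cutL G η L A A).ncard : ℝ) := Nat.cast_nonneg _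
  unfold phi
  rw [hdiffcard, h3, h4, h5, h2a]
  push_cast
  linarith

lemma aux_prune {ε : ℝ} (hε : 0 < ε) (hexp : IsExpander G ε) :
    ∀ (N : ℕ) (U : Set V), U.ncard ≤ N →
      ∃ U', U' ⊆ U ∧ phi G η L ε U' ≤ phi G η L ε U ∧
        ∀ A, A ⊆ U' → A.Nonempty → 2 * A.ncard ≤ U'.ncard →
          ε/4 * (A.ncard : ℝ) ≤ ((cutS G η L A (U' \ A)).ncard : ℝ) := by
  intro N
  induction N with
  | zero =>
    intro U hU
    refine ⟨U, subset_rfl, le_rfl, fun A hA hne hhalf => ?_⟩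
    have : A.ncard = 0 := by
      have := Set.ncard_le_ncard hA (Set.toFinite _); omega
    rw [this]
    simp
  | succ N ih =>
    intro U hU
    by_cases hbad : ∃ A, A ⊆ U ∧ A.Nonempty ∧ 2 * A.ncard ≤ U.ncard ∧
        ((cutS G η L A (U \ A)).ncard : ℝ) < ε/4 * A.ncard
    · obtain ⟨A, hAU, hne, hhalf, hb⟩ := hbad
      have hstep := aux_step G η L hε hexp U A hAU hne hhalf hb
      have hlt : (U \ A).ncard ≤ N := by
        have h1 : (U \ A).ncard = U.ncard - A.ncard := Set.ncard_diff hAU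
        have h2 : 0 < A.ncard := (Set.ncard_pos (Set.toFinite _)).2 hne
        omega
      obtain ⟨U', hsub, hphi, hgood⟩ := ih (U \ A) hlt
      exact ⟨U', hsub.trans Set.diff_subset, hphi.trans hstep, hgood⟩
    · push_neg at hbad
      exact ⟨U, subset_rfl, le_rfl, fun A hA hne hhalf => hbad A hA hne hhalf⟩
end cuts

/-! ### Ball growth -/

section growthDef
variable {V : Type} [Fintype V] {D : ℕ}
variable (G : SimpleGraph V) (η : V → EuclideanSpace ℝ (Fin D)) (L : ℝ)

def grow (U : Set V) (u : V) : ℕ → Set V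
  | 0 => {u}
  | (k+1) => grow U u k ∪ {b | b ∈ U ∧ ∃ a ∈ grow U u k, G.Adj a b ∧ ‖η a - η b‖ < L}

variable {G η L}

lemma grow_mono (U : Set V) (u : V) (k : ℕ) : grow G η L U u k ⊆ grow G η L U u (k+1) :=
  Set.subset_union_left

lemma grow_subset (U : Set V) (u : V) (hu : u ∈ U) : ∀ k, grow G η L U u k ⊆ U := by
  intro k
  induction k with
  | zero => intro v hv; rwa [show v = u from hv]
  | succ k ih =>
    intro v hv
    rcases hv with hv | hv
    · exact ih hv
    · exact hv.1

lemma grow_ne (U : Set V) (u : V) : ∀ k, (grow G η L U u k).Nonempty := by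
  intro k
  induction k with
  | zero => exact ⟨u, rfl⟩
  | succ k ih => exact ih.mono (grow_mono U u k)

lemma grow_dist (U : Set V) (u : V) (hL : 0 ≤ L) :
    ∀ k, ∀ v ∈ grow G η L U u k, ‖η u - η v‖ ≤ k * L := by
  intro k
  induction k with
  | zero =>
    intro v hv; rw [show v = u from hv]
    simp
  | succ k ih =>
    intro v hv
    rcases hv with hv | ⟨_, a, ha, _, hshort⟩
    · have := ih v hv
      have hk : (k : ℝ) * L ≤ (k+1) * L := by nlinarith
      push_cast
      linarith
    · have h1 := ih a ha
      calc ‖η u - η v‖ ≤ ‖η u - η a‖ + ‖η a - η v‖ := norm_sub_le_norm_sub_add_norm_sub _ _ _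
        _ ≤ k * L + L := by linarith
        _ = (k+1 : ℕ) * L := by push_cast; ring

lemma grow_step {ε : ℝ} {δ : ℕ} (hε : 0 < ε) (hδ : 1 ≤ δ)
    (hdeg : maxDegLe G δ) (U : Set V) (u : V) (hu : u ∈ U)
    (hgood : ∀ A, A ⊆ U → A.Nonempty → 2 * A.ncard ≤ U.ncard →
      ε/4 * (A.ncard : ℝ) ≤ ((cutS G η L A (U \ A)).ncard : ℝ))
    (k : ℕ) (hhalf : 2 * (grow G η L U u k).ncard ≤ U.ncard) :
    (1 + ε/(4*δ)) * ((grow G η L U u k).ncard : ℝ)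
      ≤ ((grow G η L U u (k+1)).ncard : ℝ) := by
  classical
  set A := grow G η L U u k with hA
  have hAU : A ⊆ U := grow_subset U u hu k
  have hAne : A.Nonempty := grow_ne U u k
  have h1 := hgood A hAU hAne hhalf
  set bd : Set V := {b | b ∈ U \ A ∧ ∃ a ∈ A, G.Adj a b ∧ ‖η a - η b‖ < L} with hbd
  have h2 : (cutS G η L A (U \ A)).ncard ≤ δ * bd.ncard := by
    apply aux_fiber (f := Prod.snd)
    · rintro ⟨a, b⟩ ⟨ha, hb, hadj, hshort⟩
      exact ⟨hb, a, ha, hadj, hshort⟩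
    · intro b
      have hle : {p : V × V | p ∈ cutS G η L A (U \ A) ∧ p.2 = b}.ncard
          ≤ (G.neighborSet b).ncard := by
        apply Set.ncard_le_ncard_of_injOn (fun p => p.1)
        · rintro ⟨a, b'⟩ ⟨⟨ha, hb, hadj, _⟩, rfl⟩
          exact hadj.symm
        · rintro ⟨a, b1⟩ ⟨_, h1'⟩ ⟨a', b2⟩ ⟨_, h2'⟩ h
          simp only at h h1' h2'
          subst h1'; subst h2'; subst h
          rfl
      exact hle.trans (hdeg b)
  have h3 : bd ⊆ grow G η L U u (k+1) := by
    rintro b ⟨hb, a, ha, hadj, hshort⟩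
    exact Or.inr ⟨hb.1, a, ha, hadj, hshort⟩
  have h4 : Disjoint A bd := by
    rw [Set.disjoint_left]
    rintro v hv ⟨hvd, _⟩
    exact hvd.2 hv
  have h5 : A.ncard + bd.ncard ≤ (grow G η L U u (k+1)).ncard := by
    rw [← Set.ncard_union_eq h4 (Set.toFinite _) (Set.toFinite _)]
    exact Set.ncard_le_ncard (Set.union_subset (grow_mono U u k) h3) (Set.toFinite _)
  have hδR : (0 : ℝ) < (δ : ℝ) := by exact_mod_cast hδ
  have h2R : ((cutS G η L A (U \ A)).ncard : ℝ) ≤ (δ : ℝ) * bd.ncard := by exact_mod_cast h2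
  have h5R : (A.ncard : ℝ) + bd.ncard ≤ ((grow G η L U u (k+1)).ncard : ℝ) := by
    exact_mod_cast h5
  have hbdR : ε/(4*δ) * (A.ncard : ℝ) ≤ (bd.ncard : ℝ) := by
    rw [div_mul_eq_mul_div, div_le_iff₀ (by positivity)]
    calc ε * (A.ncard : ℝ) = 4 * (ε/4 * A.ncard) := by ring
      _ ≤ 4 * ((cutS G η L A (U \ A)).ncard : ℝ) := by linarith
      _ ≤ 4 * ((δ : ℝ) * bd.ncard) := by linarith
      _ = (bd.ncard : ℝ) * (4 * δ) := by ring
  calc (1 + ε/(4*δ)) * ((A.ncard : ℕ) : ℝ) = (A.ncard : ℝ) + ε/(4*δ) * A.ncard := by ring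
    _ ≤ (A.ncard : ℝ) + bd.ncard := by linarith
    _ ≤ _ := h5R

lemma grow_geom {ε : ℝ} {δ : ℕ} (hε : 0 < ε) (hδ : 1 ≤ δ)
    (hdeg : maxDegLe G δ) (U : Set V) (u : V) (hu : u ∈ U)
    (hgood : ∀ A, A ⊆ U → A.Nonempty → 2 * A.ncard ≤ U.ncard →
      ε/4 * (A.ncard : ℝ) ≤ ((cutS G η L A (U \ A)).ncard : ℝ)) :
    ∀ k, 2 * (grow G η L U u k).ncard ≤ U.ncard →
      (1 + ε/(4*δ))^k ≤ ((grow G η L U u k).ncard : ℝ) := by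
  intro k
  induction k with
  | zero =>
    intro _
    have h0 : (grow G η L U u 0).ncard = 1 := Set.ncard_singleton u
    rw [pow_zero, h0]; norm_num
  | succ k ih =>
    intro hhalf
    have hmono : (grow G η L U u k).ncard ≤ (grow G η L U u (k+1)).ncard :=
      Set.ncard_le_ncard (grow_mono U u k) (Set.toFinite _)
    have hhk : 2 * (grow G η L U u k).ncard ≤ U.ncard := by omega
    have h1 := ih hhk
    have h2 := grow_step hε hδ hdeg U u hu hgood k hhk
    have hpos : (0:ℝ) < 1 + ε/(4*δ) := by positivity
    calc (1 + ε/(4*δ))^(k+1) = (1 + ε/(4*δ))^k * (1 + ε/(4*δ)) := by ring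
      _ ≤ ((grow G η L U u k).ncard : ℝ) * (1 + ε/(4*δ)) := by nlinarith
      _ = (1 + ε/(4*δ)) * ((grow G η L U u k).ncard : ℝ) := by ring
      _ ≤ _ := h2

lemma grow_meet {ε : ℝ} {δ : ℕ} (hε : 0 < ε) (hδ : 1 ≤ δ) (hL : 0 ≤ L)
    (hdeg : maxDegLe G δ) (U : Set V) (u w : V) (hu : u ∈ U) (hw : w ∈ U)
    (hgood : ∀ A, A ⊆ U → A.Nonempty → 2 * A.ncard ≤ U.ncard →
      ε/4 * (A.ncard : ℝ) ≤ ((cutS G η L A (U \ A)).ncard : ℝ))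
    (k : ℕ) (hk : (Fintype.card V : ℝ) < (1 + ε/(4*δ))^k) :
    ‖η u - η w‖ ≤ 2 * k * L := by
  have hbig : ∀ v ∈ U, ¬ (2 * (grow G η L U v k).ncard ≤ U.ncard) := by
    intro v hv hc
    have h1 := grow_geom hε hδ hdeg U v hv hgood k hc
    have h2 : (grow G η L U v k).ncard ≤ Fintype.card V := by
      have := Set.ncard_le_ncard (Set.subset_univ (grow G η L U v k)) (Set.toFinite _)
      rwa [Set.ncard_univ, Nat.card_eq_fintype_card] at this
    have h3 : ((grow G η L U v k).ncard : ℝ) ≤ (Fintype.card V : ℝ) := by exact_mod_cast h2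
    linarith
  have hUcard : (grow G η L U u k).ncard + (grow G η L U w k).ncard > U.ncard := by
    have h1 := hbig u hu
    have h2 := hbig w hw
    omega
  have hint : ((grow G η L U u k) ∩ (grow G η L U w k)).Nonempty := by
    by_contra hc
    rw [Set.not_nonempty_iff_eq_empty] at hc
    have hd : Disjoint (grow G η L U u k) (grow G η L U w k) :=
      Set.disjoint_iff_inter_eq_empty.2 hc
    have he := Set.ncard_union_eq hd (Set.toFinite _) (Set.toFinite _)
    have hsub : (grow G η L U u k) ∪ (grow G η L U w k) ⊆ U :=
      Set.union_subset (grow_subset U u hu k) (grow_subset U w hw k)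
    have := Set.ncard_le_ncard hsub (Set.toFinite _)
    omega
  obtain ⟨z, hz1, hz2⟩ := hint
  have d1 := grow_dist U u hL k z hz1
  have d2 := grow_dist U w hL k z hz2
  calc ‖η u - η w‖ ≤ ‖η u - η z‖ + ‖η z - η w‖ := norm_sub_le_norm_sub_add_norm_sub _ _ _
    _ ≤ k * L + k * L := by rw [norm_sub_rev (η z)]; linarith
    _ = 2 * k * L := by ring
end growthDef

/-! ### Main theorem -/

set_option maxHeartbeats 2000000 in
/-- For every `D ≥ 1`, `θ > 0` and `δ`, there is `c > 0` such that for every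
`ε ∈ (0,1]`, every `ε`-expander `G` on `n ≥ 2` vertices of maximum degree `≤ δ`, and every
`θ`-embedding `η` into `ℝ^D`, at least `n·ε/24` edges have length
`≥ c · n^{1/D} · ε / log n` under `η`. -/
theorem stmt_8 (D : ℕ) (hD : 1 ≤ D) (θ : ℝ) (hθ : 0 < θ) (δ : ℕ) :
    ∃ c : ℝ, 0 < c ∧
      ∀ (ε : ℝ), ε ∈ Set.Ioc (0 : ℝ) 1 →
      ∀ (V : Type) [Fintype V] (G : SimpleGraph V),
        2 ≤ Nat.card V → maxDegLe G δ → IsExpander G ε →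
        ∀ η : V → EuclideanSpace ℝ (Fin D), IsThetaEmbedding θ η →
          (Nat.card V : ℝ) * ε / 24 ≤
            ((longEdges G η
              (c * (Nat.card V : ℝ) ^ (1 / (D : ℝ)) * ε /
                Real.log (Nat.card V))).ncard : ℝ) := by
  classical
  refine ⟨θ / (200 * ((δ:ℝ) + 1)), by positivity, ?_⟩
  rintro ε ⟨hε0, hε1⟩ V _ G hn hdeg hexp η hemb
  set c : ℝ := θ / (200 * ((δ:ℝ) + 1)) with hcdef
  have hc0 : 0 < c := by positivity
  set n : ℕ := Nat.card V with hndef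
  have hcardF : Fintype.card V = n := (Nat.card_eq_fintype_card).symm
  have hn2 : 2 ≤ n := hn
  have hn0 : 0 < n := by omega
  have hnR : (2:ℝ) ≤ (n:ℝ) := by exact_mod_cast hn2
  have hlog : 0 < Real.log n := Real.log_pos (by linarith)
  have hlog2 : (0.6931471803 : ℝ) < Real.log 2 := Real.log_two_gt_d9
  have hlogn2 : Real.log 2 ≤ Real.log n := by
    apply Real.log_le_log (by norm_num) hnR
  set X : ℝ := (n:ℝ) ^ (1/(D:ℝ)) with hXdef
  have hX0 : 0 < X := by
    apply Real.rpow_pos_of_pos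
    exact_mod_cast hn0
  set L : ℝ := c * X * ε / Real.log n with hLdef
  have hL0 : 0 ≤ L := by positivity
  -- no isolated vertices
  have hnbr : ∀ v : V, ∃ u, G.Adj v u := by
    intro v
    have h := hexp {v} ⟨v, rfl⟩ (by rw [Set.ncard_singleton]; omega)
    rw [Set.ncard_singleton] at h
    have hbne : (vertexBoundary G {v}).Nonempty := by
      rcases Set.eq_empty_or_nonempty (vertexBoundary G {v}) with he | he
      · rw [he] at h; simp at h; linarith
      · exact he
    obtain ⟨b, hb⟩ := hbne
    obtain ⟨u, hu, hadj⟩ := hb.2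
    rw [Set.mem_singleton_iff] at hu
    subst hu
    exact ⟨b, hadj⟩
  have hVne : Nonempty V := by
    rw [← Fintype.card_pos_iff]; omega
  have hδ1 : 1 ≤ δ := by
    obtain ⟨v⟩ := hVne
    obtain ⟨u, hu⟩ := hnbr v
    have h1 : 0 < (G.neighborSet v).ncard :=
      (Set.ncard_pos (Set.toFinite _)).2 ⟨u, hu⟩
    exact le_trans h1 (hdeg v)
  -- edge count
  have hedge : n ≤ 2 * G.edgeSet.ncard := by
    choose nb hnb using hnbr
    have h := aux_fiber (s := (Set.univ : Set V)) (t := G.edgeSet)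
      (fun v => s(v, nb v)) 2
      (fun v _ => (SimpleGraph.mem_edgeSet G).2 (hnb v))
      (fun e => by
        induction e using Sym2.ind with
        | _ x y =>
          have hsub : {a | a ∈ Set.univ ∧ s(a, nb a) = s(x, y)} ⊆ {x, y} := by
            rintro a ⟨_, ha⟩
            rcases Sym2.eq_iff.1 ha with ⟨h1, _⟩ | ⟨h1, _⟩
            · exact Or.inl h1
            · exact Or.inr h1
          calc {a | a ∈ Set.univ ∧ s(a, nb a) = s(x, y)}.ncard
              ≤ ({x, y} : Set V).ncard := Set.ncard_le_ncard hsub (Set.toFinite _)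
            _ ≤ 2 := by
                apply le_trans (Set.ncard_insert_le x {y})
                rw [Set.ncard_singleton])
    rwa [Set.ncard_univ, ← hndef] at h
  by_cases hcase : L ≤ θ
  · -- trivial branch: all edges are long
    have hsubset : G.edgeSet ⊆ longEdges G η L := by
      intro e he
      refine ⟨he, ?_⟩
      intro u v hrep
      rw [hrep] at he
      have hne : u ≠ v := (SimpleGraph.mem_edgeSet G |>.1 he).ne
      exact le_trans hcase (hemb u v hne)
    have h1 : G.edgeSet.ncard ≤ (longEdges G η L).ncard :=
      Set.ncard_le_ncard hsubset (Set.toFinite _)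
    have h2 : (n:ℝ) ≤ 2 * (longEdges G η L).ncard := by
      have : (n:ℝ) ≤ 2 * G.edgeSet.ncard := by exact_mod_cast hedge
      have h3 : (G.edgeSet.ncard : ℝ) ≤ ((longEdges G η L).ncard : ℝ) := by exact_mod_cast h1
      linarith
    have hn0R : (0:ℝ) ≤ (n:ℝ) := by positivity
    nlinarith
  · -- main branch
    push_neg at hcase  -- θ < L
    by_contra hcon
    push_neg at hcon
    set m := (longEdges G η L).ncard with hmdef
    have hmR : ((m:ℝ)) < (n:ℝ) * ε / 24 := hcon
    -- long ordered pairs are at most 2m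
    have hlongpairs : (cutL G η L Set.univ Set.univ).ncard ≤ 2 * m := by
      apply aux_fiber (fun p : V × V => s(p.1, p.2)) 2
      · rintro ⟨a, b⟩ ⟨_, _, hadj, hlong⟩
        refine ⟨(SimpleGraph.mem_edgeSet G).2 hadj, ?_⟩
        intro u v hrep
        rcases Sym2.eq_iff.1 hrep with ⟨h1, h2⟩ | ⟨h1, h2⟩
        · subst h1; subst h2; exact hlong
        · subst h1; subst h2; rwa [norm_sub_rev]
      · intro e
        induction e using Sym2.ind with
        | _ x y =>
          have hsub : {p : V × V | p ∈ cutL G η L Set.univ Set.univ ∧ s(p.1, p.2) = s(x, y)}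
              ⊆ {(x, y), (y, x)} := by
            rintro ⟨a, b⟩ ⟨_, hab⟩
            rcases Sym2.eq_iff.1 hab with ⟨h1, h2⟩ | ⟨h1, h2⟩
            · subst h1; subst h2; exact Or.inl rfl
            · subst h1; subst h2; exact Or.inr rfl
          calc {p : V × V | p ∈ cutL G η L Set.univ Set.univ ∧ s(p.1, p.2) = s(x, y)}.ncard
              ≤ ({(x, y), (y, x)} : Set (V × V)).ncard :=
                Set.ncard_le_ncard hsub (Set.toFinite _)
            _ ≤ 2 := by
                apply le_trans (Set.ncard_insert_le _ _)
                rw [Set.ncard_singleton]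
    -- phi of univ
    have hphiuniv : phi G η L ε Set.univ ≤ 2 * (m:ℝ) := by
      unfold phi
      have e1 : ((Set.univ : Set V)).ncard = n := by rw [Set.ncard_univ, hndef]
      have e2 : (cutA G Set.univ (Set.univ : Set V)ᶜ) = ∅ := by
        ext p; simp [cutA]
      have e3 : ((cutL G η L Set.univ Set.univ).ncard : ℝ) ≤ 2 * m := by exact_mod_cast hlongpairs
      rw [e1, e2, hcardF]
      simp only [Set.ncard_empty, Nat.cast_zero]
      linarith
    -- prune
    obtain ⟨U, hUsub, hUphi, hUgood⟩ :=
      aux_prune G η L hε0 hexp ((Set.univ : Set V).ncard) Set.univ le_rfl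
    have hphiU : ε/2 * ((n:ℝ) - U.ncard) ≤ 2 * m := by
      have h1 : ε/2 * ((Fintype.card V : ℝ) - U.ncard) ≤ phi G η L ε U := by
        unfold phi
        have a1 : (0:ℝ) ≤ ((cutA G U Uᶜ).ncard : ℝ) := by positivity
        have a2 : (0:ℝ) ≤ ((cutL G η L U U).ncard : ℝ) := by positivity
        linarith
      rw [hcardF] at h1
      linarith [hUphi, hphiuniv]
    have hUbig : (5:ℝ)/6 * n < (U.ncard : ℝ) := by
      have h1 : (n:ℝ) - U.ncard < n/6 := by
        by_contra hc
        push_neg at hc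
        have : ε/2 * ((n:ℝ)/6) ≤ ε/2 * ((n:ℝ) - U.ncard) := by nlinarith
        nlinarith
      linarith
    have hUcard_le : (U.ncard : ℝ) ≤ n := by
      have := Set.ncard_le_ncard (Set.subset_univ U) (Set.toFinite _)
      rw [Set.ncard_univ, ← hndef] at this
      exact_mod_cast this
    have hUne : U.Nonempty := by
      apply Set.nonempty_of_ncard_ne_zero
      intro hc
      rw [hc] at hUbig
      push_cast at hUbig
      nlinarith
    -- X is large
    have hca : c * (200 * ((δ:ℝ)+1)) = θ := by rw [hcdef]; field_simp
    have hd2 : (2:ℝ) ≤ (δ:ℝ) + 1 := by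
      have : 1 ≤ (δ:ℝ) := by exact_mod_cast hδ1
      linarith
    have hcx : θ * Real.log 2 < c * X := by
      have hmul : θ * Real.log n < c * X * ε := (lt_div_iff₀ hlog).1 hcase
      have h2 : c * X * ε ≤ c * X := by nlinarith [mul_nonneg hc0.le hX0.le]
      have h3 : θ * Real.log 2 ≤ θ * Real.log n := by nlinarith
      linarith
    have hX6 : 6 ≤ X := by
      have h5 : 276 * c ≤ θ * Real.log 2 := by
        calc (276:ℝ) * c = c * (200 * 2) * 0.69 := by ring
          _ ≤ c * (200 * ((δ:ℝ)+1)) * Real.log 2 := by nlinarith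
          _ = θ * Real.log 2 := by rw [hca]
      have h6 : c * 276 < c * X := by nlinarith
      have h7 : (276:ℝ) < X := lt_of_mul_lt_mul_left h6 hc0.le
      linarith
    -- injectivity and packing
    have hinj : Set.InjOn η U := by
      intro u hu v hv he
      by_contra hne
      have hemb' := hemb u v hne
      rw [he, sub_self, norm_zero] at hemb'
      linarith
    have hPcard : ((η '' U).ncard : ℝ) = (U.ncard : ℝ) := by
      rw [Set.ncard_image_of_injOn hinj]
    have hsep : ∀ x ∈ η '' U, ∀ y ∈ η '' U, x ≠ y → θ ≤ ‖x - y‖ := by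
      rintro x ⟨u, hu, rfl⟩ y ⟨v, hv, rfl⟩ hxy
      apply hemb
      rintro rfl; exact hxy rfl
    obtain ⟨x, hx, y, hy, hxy⟩ :=
      aux_packing hD hθ (η '' U) (Set.toFinite _) (hUne.image η) hsep
    obtain ⟨u, hu, rfl⟩ := hx
    obtain ⟨w, hw, rfl⟩ := hy
    rw [hPcard] at hxy
    -- the number of steps
    set q : ℕ := ⌈(4*(δ:ℝ))/ε⌉₊ with hqdef
    set j : ℕ := Nat.log 2 n + 1 with hjdef
    set k : ℕ := q * j with hkdef
    have hδR : (1:ℝ) ≤ (δ:ℝ) := by exact_mod_cast hδ1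
    have hb2 : (2:ℝ) ≤ (1 + ε/(4*δ))^q := by
      have hq : (4*(δ:ℝ))/ε ≤ q := Nat.le_ceil _
      have hber : 1 + (q:ℝ) * (ε/(4*δ)) ≤ (1 + ε/(4*δ))^q := by
        apply one_add_mul_le_pow
        have : (0:ℝ) ≤ ε/(4*δ) := by positivity
        linarith
      have h4 : 4*(δ:ℝ) ≤ q * ε := by
        rw [div_le_iff₀ hε0] at hq; linarith
      have h5 : (1:ℝ) ≤ (q:ℝ) * (ε/(4*δ)) := by
        rw [mul_div_assoc', le_div_iff₀ (by positivity)]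
        linarith
      linarith
    have hpow : (n:ℝ) < (1 + ε/(4*δ))^k := by
      have h2j : (n:ℝ) < 2^j := by
        have := Nat.lt_pow_succ_log_self (by norm_num : 1 < 2) n
        exact_mod_cast this
      have hmono : (2:ℝ)^j ≤ ((1 + ε/(4*δ))^q)^j :=
        pow_le_pow_left₀ (by norm_num) hb2 j
      rw [hkdef, pow_mul]
      calc (n:ℝ) < 2^j := h2j
        _ ≤ _ := hmono
    have hmeet := grow_meet hε0 hδ1 hL0 hdeg U u w hu hw hUgood k
      (by rw [hcardF]; exact hpow)
    -- bound on k
    have hqR : (q:ℝ) ≤ 5*δ/ε := by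
      have h1 : (q:ℝ) < 4*(δ:ℝ)/ε + 1 := Nat.ceil_lt_add_one (by positivity)
      have h2 : (1:ℝ) ≤ (δ:ℝ)/ε := by
        rw [le_div_iff₀ hε0]; nlinarith
      have h3 : 4*(δ:ℝ)/ε + (δ:ℝ)/ε = 5*δ/ε := by ring
      linarith
    have hjR : (j:ℝ) ≤ 3 * Real.log n := by
      have hl : (2:ℝ)^(Nat.log 2 n) ≤ (n:ℝ) := by
        exact_mod_cast Nat.pow_log_le_self 2 (by omega)
      have h1 : (Nat.log 2 n : ℝ) * Real.log 2 ≤ Real.log n := by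
        rw [← Real.log_pow]
        exact Real.log_le_log (by positivity) hl
      have h4 : (Nat.log 2 n : ℝ) + 1 ≤ 3 * Real.log n := by
        nlinarith
      have h5 : (j:ℝ) = (Nat.log 2 n : ℝ) + 1 := by rw [hjdef]; push_cast; ring
      rw [h5]; exact h4
    have hkR : (k:ℝ) ≤ 15*δ*Real.log n/ε := by
      have hkq : (k:ℝ) = (q:ℝ) * j := by rw [hkdef]; push_cast; ring
      rw [hkq]
      calc (q:ℝ)*j ≤ (5*δ/ε)*(3*Real.log n) := by
            apply mul_le_mul hqR hjR (Nat.cast_nonneg _) (by positivity)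
        _ = 15*δ*Real.log n/ε := by ring
    -- final chain
    have hPX : (5:ℝ)/6 * X ≤ (U.ncard:ℝ)^(1/(D:ℝ)) := by
      have hp16 : (5:ℝ)/6*(n:ℝ) ≤ (U.ncard:ℝ) := le_of_lt hUbig
      have hA1 : ((5:ℝ)/6 * n)^(1/(D:ℝ)) ≤ (U.ncard:ℝ)^(1/(D:ℝ)) :=
        Real.rpow_le_rpow (by positivity) hp16 (by positivity)
      have hA2 : ((5:ℝ)/6 * n)^(1/(D:ℝ)) = ((5:ℝ)/6)^(1/(D:ℝ)) * X := by
        rw [hXdef, ← Real.mul_rpow (by norm_num) (by positivity)]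
      have hA3 : (5:ℝ)/6 ≤ ((5:ℝ)/6)^(1/(D:ℝ)) := by
        have h1D : 1/(D:ℝ) ≤ 1 := by
          rw [div_le_one (by exact_mod_cast hD : (0:ℝ) < (D:ℝ))]
          exact_mod_cast hD
        calc (5:ℝ)/6 = ((5:ℝ)/6)^(1:ℝ) := (Real.rpow_one _).symm
          _ ≤ ((5:ℝ)/6)^(1/(D:ℝ)) :=
            Real.rpow_le_rpow_of_exponent_ge (by norm_num) (by norm_num) h1D
      calc (5:ℝ)/6 * X ≤ ((5:ℝ)/6)^(1/(D:ℝ)) * X :=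
            mul_le_mul_of_nonneg_right hA3 hX0.le
        _ = ((5:ℝ)/6 * n)^(1/(D:ℝ)) := hA2.symm
        _ ≤ _ := hA1
    have hLbound : 2*(k:ℝ)*L ≤ 30*(δ:ℝ)*c*X := by
      have e1 : 2*(15*(δ:ℝ)*Real.log n/ε) * (c*X*ε/Real.log n) = 30*δ*c*X := by
        field_simp
        ring
      have e2 : 2*(k:ℝ) ≤ 2*(15*(δ:ℝ)*Real.log n/ε) := by linarith
      calc 2*(k:ℝ)*L ≤ 2*(15*(δ:ℝ)*Real.log n/ε)*L :=
            mul_le_mul_of_nonneg_right e2 hL0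
        _ = 2*(15*(δ:ℝ)*Real.log n/ε) * (c*X*ε/Real.log n) := by rw [hLdef]
        _ = 30*δ*c*X := e1
    have hchain : θ/3 * X ≤ 30*(δ:ℝ)*c*X := by
      have hX1 : (1:ℝ) ≤ X/6 := by linarith
      have hstep1 : θ/3 * X ≤ θ/2 * ((U.ncard:ℝ)^(1/(D:ℝ)) - 1) := by
        have hs1 : (5:ℝ)/6 * X - 1 ≤ (U.ncard:ℝ)^(1/(D:ℝ)) - 1 := by linarith
        have hs2 : θ/3 * X ≤ θ/2 * ((5:ℝ)/6 * X - 1) := by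
          nlinarith [mul_nonneg hθ.le (by linarith : (0:ℝ) ≤ X - 6)]
        have hs3 : θ/2 * ((5:ℝ)/6 * X - 1) ≤ θ/2 * ((U.ncard:ℝ)^(1/(D:ℝ)) - 1) :=
          mul_le_mul_of_nonneg_left hs1 (by positivity)
        linarith
      calc θ/3 * X ≤ θ/2 * ((U.ncard:ℝ)^(1/(D:ℝ)) - 1) := hstep1
        _ ≤ ‖η u - η w‖ := hxy
        _ ≤ 2*k*L := hmeet
        _ ≤ 30*(δ:ℝ)*c*X := hLbound
    have hfin : θ/3 ≤ 30*(δ:ℝ)*c := le_of_mul_le_mul_right hchain hX0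
    have h30 : 30*(δ:ℝ)*c < θ/3 := by
      have hx1 : θ/3 - 30*(δ:ℝ)*c = ((110*(δ:ℝ) + 200)/3) * c := by
        rw [← hca]; ring
      have hx2 : 0 < ((110*(δ:ℝ) + 200)/3) * c := by positivity
      linarith
    linarith
end

section
/- Let t ≥ 1 be a natural number and let G = (V,E) be a finite simple graph that is t-dense. Then there exists a subset W ⊆ V with |W| ≥ t/2 such that the induced subgraph G[W] is a (t/(3|W|))-expander. -/
section Helpers

variable {V : Type*} [Fintype V]

private lemma bridge_sep {t : ℕ} (G : SimpleGraph V) {U : Set V}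
    (hU : ∀ S : Set U, IsSeparator (G.induce U) S → t ≤ S.ncard)
    (A S B : Set V) (hAU : A ⊆ U) (hSU : S ⊆ U) (hBU : B ⊆ U)
    (hAS : Disjoint A S) (hBS : Disjoint B S) (hAB : Disjoint A B)
    (hcover : A ∪ S ∪ B = U)
    (hadj : ∀ a ∈ A, ∀ b ∈ B, ¬ G.Adj a b)
    (hA : 3 * A.ncard ≤ 2 * U.ncard) (hB : 3 * B.ncard ≤ 2 * U.ncard) :
    t ≤ S.ncard := by
  have hval : Function.Injective (Subtype.val : U → V) := Subtype.val_injective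
  have hcard : ∀ X : Set V, X ⊆ U → ((Subtype.val : U → V) ⁻¹' X).ncard = X.ncard := by
    intro X hX
    have himg : (Subtype.val '' ((Subtype.val : U → V) ⁻¹' X)) = X := by
      rw [Set.image_preimage_eq_iff, Subtype.range_coe]; exact hX
    conv_rhs => rw [← himg]
    rw [Set.ncard_image_of_injective _ hval]
  have hsep : IsSeparator (G.induce U) ((Subtype.val : U → V) ⁻¹' S) := by
    refine ⟨Subtype.val ⁻¹' A, Subtype.val ⁻¹' B, hAS.preimage _, hBS.preimage _,
      hAB.preimage _, ?_, ?_, ?_, ?_⟩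
    · ext x
      simp only [Set.mem_union, Set.mem_preimage, Set.mem_univ, iff_true]
      have hx : (x : V) ∈ A ∪ S ∪ B := by rw [hcover]; exact x.2
      simpa [Set.mem_union] using hx
    · intro a ha b hb hadj'
      exact hadj a ha b hb hadj'
    · rw [hcard A hAU, Nat.card_coe_set_eq]; exact hA
    · rw [hcard B hBU, Nat.card_coe_set_eq]; exact hB
  have := hU _ hsep
  rwa [hcard S hSU] at this

end Helpers

/-- If `G` is `t`-dense (`t ≥ 1`), then there exists `W ⊆ V` with
`|W| ≥ t/2` such that the induced subgraph `G[W]` is a `(t/(3|W|))`-expander. -/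
theorem stmt_9 {V : Type*} [Fintype V] (G : SimpleGraph V) (t : ℕ) (ht : 1 ≤ t)
    (h : IsDense G t) :
    ∃ W : Set V, (t : ℝ) / 2 ≤ (W.ncard : ℝ) ∧
      IsExpander (G.induce W) ((t : ℝ) / (3 * (W.ncard : ℝ))) := by
  classical
  obtain ⟨U, hU⟩ := h
  set n := U.ncard with hn
  -- step 0 : t ≤ n
  have htn : t ≤ n := by
    have := bridge_sep G hU ∅ U ∅ (Set.empty_subset _) le_rfl (Set.empty_subset _)
      (Set.disjoint_left.mpr (by simp)) (Set.disjoint_left.mpr (by simp))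
      (Set.disjoint_left.mpr (by simp)) (by simp)
      (by simp) (by simp) (by simp)
    exact this
  have hn0 : 0 < n := lt_of_lt_of_le ht htn
  -- the family 𝒜
  set 𝒜 : Set (Set V) :=
    {A | A ⊆ U ∧ 3 * A.ncard ≤ 2 * n ∧ (vertexBoundary G A ∩ U).ncard * n ≤ t * A.ncard}
    with h𝒜
  have hemp : (∅ : Set V) ∈ 𝒜 := by
    refine ⟨Set.empty_subset _, by simp, ?_⟩
    have : vertexBoundary G ∅ = (∅ : Set V) := by
      ext v; simp [vertexBoundary]
    simp [this]
  obtain ⟨Astar, hAmem, hAmax⟩ :=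
    Set.Finite.exists_maximalFor Set.ncard 𝒜 (Set.toFinite 𝒜) ⟨∅, hemp⟩
  obtain ⟨hAU, hAbal, hAbd⟩ := hAmem
  set Sstar : Set V := vertexBoundary G Astar ∩ U with hSstar
  set a2 := Astar.ncard with ha2def
  set s2 := Sstar.ncard with hs2def
  have hdisjAS : Disjoint Astar Sstar := by
    rw [Set.disjoint_left]
    intro v hv hv'
    exact hv'.1.1 hv
  have hSU : Sstar ⊆ U := Set.inter_subset_right
  -- claim 1 : 3 * (a2 + s2) < n
  have claim1 : 3 * (a2 + s2) < n := by
    by_contra hcon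
    push_neg at hcon
    set B : Set V := U \ (Astar ∪ Sstar) with hB
    have hABS : Astar ∪ Sstar ⊆ U := Set.union_subset hAU hSU
    have hBcard : B.ncard + (a2 + s2) = n := by
      rw [hB, ← Set.ncard_union_eq hdisjAS (Set.toFinite _) (Set.toFinite _)]
      exact Set.ncard_diff_add_ncard_of_subset hABS (Set.toFinite _)
    have hts2 : t ≤ s2 := by
      refine bridge_sep G hU Astar Sstar B hAU hSU Set.diff_subset hdisjAS ?_ ?_ ?_ ?_ hAbal ?_
      · rw [Set.disjoint_left]; intro v hv; exact fun hv' => (hv.2 (Or.inr hv'))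
      · rw [Set.disjoint_left]; intro v hv hv'; exact hv'.2 (Or.inl hv)
      · exact Set.union_diff_cancel hABS
      · intro a ha b hb hadj
        exact hb.2 (Or.inr ⟨⟨fun hbA => hb.2 (Or.inl hbA), a, ha, hadj⟩, hb.1⟩)
      · omega
    -- 3 * s2 ≤ 2 * t
    have hmul : n * (3 * s2) ≤ n * (2 * t) := by
      calc n * (3 * s2) = 3 * (s2 * n) := by ring
        _ ≤ 3 * (t * a2) := by exact Nat.mul_le_mul_left _ hAbd
        _ = t * (3 * a2) := by ring
        _ ≤ t * (2 * n) := Nat.mul_le_mul_left _ hAbal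
        _ = n * (2 * t) := by ring
    have h32 : 3 * s2 ≤ 2 * t := Nat.le_of_mul_le_mul_left hmul hn0
    omega
  have ha2n : 3 * a2 < n := by omega
  -- 3 * s2 < t
  have hs2t : 3 * s2 < t := by
    have hmul : n * (3 * s2) < n * t := by
      calc n * (3 * s2) = 3 * (s2 * n) := by ring
        _ ≤ 3 * (t * a2) := Nat.mul_le_mul_left _ hAbd
        _ = (3 * a2) * t := by ring
        _ < n * t := Nat.mul_lt_mul_of_lt_of_le ha2n le_rfl ht
    exact Nat.lt_of_mul_lt_mul_left hmul
  -- define W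
  set W : Set V := U \ (Astar ∪ Sstar) with hW
  have hWU : W ⊆ U := Set.diff_subset
  set w := W.ncard with hwdef
  have hwn : w + (a2 + s2) = n := by
    rw [hwdef, hW, ← Set.ncard_union_eq hdisjAS (Set.toFinite _) (Set.toFinite _)]
    exact Set.ncard_diff_add_ncard_of_subset (Set.union_subset hAU hSU) (Set.toFinite _)
  have h2n3w : 2 * n < 3 * w := by omega
  have hw0 : 0 < w := by omega
  -- boundary transfer lemma
  have hbd_sub : ∀ Y : Set V, Y ⊆ W →
      vertexBoundary G Y ∩ U ⊆ (vertexBoundary G Y ∩ W) ∪ Sstar := by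
    intro Y hYW v hv
    obtain ⟨hvb, hvU⟩ := hv
    by_cases hvW : v ∈ W
    · exact Or.inl ⟨hvb, hvW⟩
    · have hvAS : v ∈ Astar ∪ Sstar := by
        by_contra hc
        exact hvW ⟨hvU, hc⟩
      rcases hvAS with hvA | hvS
      · exfalso
        obtain ⟨hvnY, u, huY, hadj⟩ := hvb
        have huS : u ∈ Sstar := by
          refine ⟨⟨?_, v, hvA, hadj.symm⟩, hWU (hYW huY)⟩
          intro huA
          exact ((hYW huY).2 (Or.inl huA))
        exact (hYW huY).2 (Or.inr huS)
      · exact Or.inr hvS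
  refine ⟨W, ?_, ?_⟩
  · rw [div_le_iff₀ (by norm_num : (0:ℝ) < 2)]
    have : t ≤ 2 * w := by omega
    push_cast
    calc (t : ℝ) ≤ (2 * w : ℕ) := by exact_mod_cast this
      _ = (w : ℝ) * 2 := by push_cast; ring
  · intro A hAne hA2
    rw [Nat.card_coe_set_eq] at hA2
    by_contra hcon
    push_neg at hcon
    set Acup : Set V := Subtype.val '' A with hAcup
    have hval : Function.Injective (Subtype.val : W → V) := Subtype.val_injective
    have hacard : Acup.ncard = A.ncard := Set.ncard_image_of_injective _ hval
    set a := Acup.ncard with hadef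
    have hAcW : Acup ⊆ W := by
      rintro _ ⟨x, hx, rfl⟩; exact x.2
    have hane : Acup.Nonempty := hAne.image _
    have ha1 : 1 ≤ a := (Set.ncard_pos (Set.toFinite _)).mpr hane
    have h2aw : 2 * a ≤ w := by rw [hacard]; exact hA2
    -- boundary identification
    have hbdeq : Subtype.val '' (vertexBoundary (G.induce W) A) = vertexBoundary G Acup ∩ W := by
      ext v
      constructor
      · rintro ⟨x, ⟨hxA, u, huA, hadj⟩, rfl⟩
        refine ⟨⟨?_, u.val, ⟨u, huA, rfl⟩, hadj⟩, x.2⟩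
        rintro ⟨y, hy, hyx⟩
        exact hxA (by rwa [hval hyx] at hy)
      · rintro ⟨⟨hvn, u', ⟨u, huA, rfl⟩, hadj⟩, hvW⟩
        refine ⟨⟨v, hvW⟩, ⟨?_, u, huA, hadj⟩, rfl⟩
        intro hxA
        exact hvn ⟨⟨v, hvW⟩, hxA, rfl⟩
    set bW := (vertexBoundary G Acup ∩ W).ncard with hbWdef
    have hbweq : (vertexBoundary (G.induce W) A).ncard = bW := by
      rw [hbWdef, ← hbdeq, Set.ncard_image_of_injective _ hval]
    -- numeric form of failure
    have hltN : 3 * w * bW < t * a := by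
      have h3w : (0:ℝ) < 3 * (w:ℝ) := by positivity
      rw [hbweq] at hcon
      have : ((3 * w * bW : ℕ) : ℝ) < ((t * a : ℕ) : ℝ) := by
        push_cast
        rw [div_mul_eq_mul_div, lt_div_iff₀ h3w] at hcon
        calc (3:ℝ) * w * bW = (bW:ℝ) * (3 * w) := by ring
          _ < t * A.ncard := hcon
          _ = t * a := by rw [hacard]
      exact_mod_cast this
    by_cases hcase : 3 * (a2 + a) ≤ 2 * n
    · -- extend Astar
      have hdisj2 : Disjoint Astar Acup := by
        rw [Set.disjoint_left]
        intro v hv hv'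
        exact (hAcW hv').2 (Or.inl hv)
      have hA'card : (Astar ∪ Acup).ncard = a2 + a :=
        Set.ncard_union_eq hdisj2 (Set.toFinite _) (Set.toFinite _)
      have hbWn : bW * n ≤ t * a := by
        have h1 : bW * (2 * n) ≤ bW * (3 * w) := Nat.mul_le_mul_left _ (le_of_lt h2n3w)
        have h2 : bW * (3 * w) = 3 * w * bW := by ring
        have h3 : bW * n ≤ bW * (2 * n) := Nat.mul_le_mul_left _ (by omega)
        omega
      have hmem' : Astar ∪ Acup ∈ 𝒜 := by
        refine ⟨Set.union_subset hAU (hAcW.trans hWU), by rw [hA'card]; exact hcase, ?_⟩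
        have hincl : vertexBoundary G (Astar ∪ Acup) ∩ U ⊆ Sstar ∪ (vertexBoundary G Acup ∩ W) := by
          rintro v ⟨⟨hvn, u, huU, hadj⟩, hvU⟩
          rcases huU with huA | huA
          · exact Or.inl ⟨⟨fun hvA => hvn (Or.inl hvA), u, huA, hadj⟩, hvU⟩
          · have hv' : v ∈ vertexBoundary G Acup ∩ U :=
              ⟨⟨fun hvA => hvn (Or.inr hvA), u, huA, hadj⟩, hvU⟩
            rcases hbd_sub Acup hAcW hv' with h1 | h1
            · exact Or.inr h1
            · exact Or.inl h1
        have hle : (vertexBoundary G (Astar ∪ Acup) ∩ U).ncard ≤ s2 + bW :=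
          le_trans (Set.ncard_le_ncard hincl (Set.toFinite _)) (Set.ncard_union_le _ _)
        calc (vertexBoundary G (Astar ∪ Acup) ∩ U).ncard * n ≤ (s2 + bW) * n :=
              Nat.mul_le_mul_right _ hle
          _ = s2 * n + bW * n := by ring
          _ ≤ t * a2 + t * a := Nat.add_le_add hAbd hbWn
          _ = t * (Astar ∪ Acup).ncard := by rw [hA'card]; ring
      have := hAmax hmem' (by rw [hA'card]; omega)
      rw [hA'card] at this
      omega
    · -- big case : direct separator of U
      push_neg at hcase
      have hna : n < 3 * a := by omega
      set S : Set V := vertexBoundary G Acup ∩ U with hS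
      set B : Set V := U \ (Acup ∪ S) with hBdef
      have hAcU : Acup ⊆ U := hAcW.trans hWU
      have hdisjAS2 : Disjoint Acup S := by
        rw [Set.disjoint_left]; intro v hv hv'; exact hv'.1.1 hv
      have hScard : S.ncard ≤ bW + s2 := by
        have := hbd_sub Acup hAcW
        calc S.ncard ≤ ((vertexBoundary G Acup ∩ W) ∪ Sstar).ncard :=
              Set.ncard_le_ncard this (Set.toFinite _)
          _ ≤ bW + s2 := Set.ncard_union_le _ _
      have hBcard : B.ncard + (a + S.ncard) = n := by
        rw [hBdef, ← Set.ncard_union_eq hdisjAS2 (Set.toFinite _) (Set.toFinite _)]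
        exact Set.ncard_diff_add_ncard_of_subset
          (Set.union_subset hAcU Set.inter_subset_right) (Set.toFinite _)
      have hwlen : w ≤ n := by omega
      have htS : t ≤ S.ncard := by
        refine bridge_sep G hU Acup S B hAcU Set.inter_subset_right Set.diff_subset
          hdisjAS2 ?_ ?_ ?_ ?_ ?_ ?_
        · rw [Set.disjoint_left]; intro v hv hv'; exact hv.2 (Or.inr hv')
        · rw [Set.disjoint_left]; intro v hv hv'; exact hv'.2 (Or.inl hv)
        · exact Set.union_diff_cancel (Set.union_subset hAcU Set.inter_subset_right)
        · intro x hx b hb hadj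
          exact hb.2 (Or.inr ⟨⟨fun hbA => hb.2 (Or.inl hbA), x, hx, hadj⟩, hb.1⟩)
        · omega
        · omega
      have h6bW : 6 * bW < t := by
        have h1 : a * (6 * bW) ≤ w * (3 * bW) := by
          calc a * (6 * bW) = (2 * a) * (3 * bW) := by ring
            _ ≤ w * (3 * bW) := Nat.mul_le_mul_right _ h2aw
        have h2 : w * (3 * bW) = 3 * w * bW := by ring
        have h3 : a * (6 * bW) < a * t := by
          calc a * (6 * bW) ≤ 3 * w * bW := by omega
            _ < t * a := hltN
            _ = a * t := by ring
        exact Nat.lt_of_mul_lt_mul_left h3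
      omega
end
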